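/- arXiv:0808.2822 — 3 statements merged into one kernel-verified Lean document; each statement's English description precedes it below -/
import Mathlib

section
/- For every n ≥ 1, the area generating polynomial of type B Dyck paths satisfies the recurrence Cat_{B_n}(q) = Cat_n(q) + Σ_{k=0}^{n−1} q^{2k+1} · Cat_{B_k}(q) · Cat_{n−k}(q) in ℤ[q], where Cat_m(q) = Σ_{w ∈ D_m} q^{area(w)} is the area generating polynomial over Dyck paths of length m (with Cat_0(q) = 1), and Cat_{B_m}(q) = Σ_w q^{area(w)} is the sum over all Dyck paths w of type B_m (with Cat_{B_0}(q) = 1). -/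
open scoped Classical

namespace Stmt

/-- Number of north steps (`true`) among the first `k` steps of the path `w`. -/
def countN {m : ℕ} (w : Fin m → Bool) (k : ℕ) : ℕ :=
  (Finset.univ.filter (fun t : Fin m => (t : ℕ) < k ∧ w t = true)).card

/-- Number of east steps (`false`) among the first `k` steps of the path `w`. -/
def countE {m : ℕ} (w : Fin m → Bool) (k : ℕ) : ℕ :=
  (Finset.univ.filter (fun t : Fin m => (t : ℕ) < k ∧ w t = false)).card

/-- A Dyck path of length `n`: `n` north and `n` east steps, every prefix has
at least as many north as east steps. -/
def IsDyckA (n : ℕ) (w : Fin (2 * n) → Bool) : Prop :=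
  countN w (2 * n) = n ∧ ∀ k : ℕ, countE w k ≤ countN w k

/-- A Dyck path of type `B_n`: `2n` steps, every prefix has at least as many
north as east steps. -/
def IsDyckB (n : ℕ) (w : Fin (2 * n) → Bool) : Prop :=
  ∀ k : ℕ, countE w k ≤ countN w k

/-- The unit cell `[i-1,i] × [j-1,j]` lies below the lattice path `w`:
at some time the path has `x`-coordinate `< i` and `y`-coordinate `≥ j`. -/
def CellBelow {m : ℕ} (w : Fin m → Bool) (i j : ℕ) : Prop :=
  ∃ k : ℕ, countE w k < i ∧ j ≤ countN w k

/-- Area of a (type `A`) Dyck path: number of cells `b_{i,j}` with `i < j`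
lying below the path. -/
noncomputable def areaA {m : ℕ} (w : Fin m → Bool) : ℕ :=
  {p : ℕ × ℕ | 1 ≤ p.1 ∧ p.1 < p.2 ∧ CellBelow w p.1 p.2}.ncard

/-- Area of a type `B_n` Dyck path: number of cells `b_{i,j}` with
`1 ≤ i < j ≤ 2n+1-i` lying below the path. -/
noncomputable def areaB (n : ℕ) (w : Fin (2 * n) → Bool) : ℕ :=
  {p : ℕ × ℕ | 1 ≤ p.1 ∧ p.1 < p.2 ∧ p.2 ≤ 2 * n + 1 - p.1 ∧
    CellBelow w p.1 p.2}.ncard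

/-- Descent set of a path, 1-indexed: positions `i` with `w_i = E`, `w_{i+1} = N`. -/
def pathDes {m : ℕ} (w : Fin m → Bool) : Finset ℕ :=
  (Finset.Ioo 0 m).filter (fun i =>
    ∃ h : i < m, w ⟨i - 1, Nat.lt_of_le_of_lt (Nat.sub_le i 1) h⟩ = false ∧ w ⟨i, h⟩ = true)

def desPath {m : ℕ} (w : Fin m → Bool) : ℕ := (pathDes w).card

/-- Major index of a Dyck path of length `n`: `maj(w) = ∑_{i ∈ Des(w)} (2n - i)`. -/
def majA (n : ℕ) (w : Fin (2 * n) → Bool) : ℕ :=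
  ∑ i ∈ pathDes w, (2 * n - i)

/-- Number of east steps of a path. -/
def negPath {m : ℕ} (w : Fin m → Bool) : ℕ :=
  (Finset.univ.filter (fun t : Fin m => w t = false)).card

/-- Type `B` major index: `maj(w) = 2 ⬝ (neg(w) + ∑_{i ∈ Des(w)} (2n - i))`. -/
def majB (n : ℕ) (w : Fin (2 * n) → Bool) : ℕ :=
  2 * (negPath w + ∑ i ∈ pathDes w, (2 * n - i))

/-- Area generating polynomial of Dyck paths of length `n`. -/
noncomputable def CatA (n : ℕ) : Polynomial ℤ :=
  ∑ w ∈ Finset.univ.filter (fun w : Fin (2 * n) → Bool => IsDyckA n w),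
    Polynomial.X ^ areaA w

/-- Area generating polynomial of Dyck paths of type `B_n`. -/
noncomputable def CatB (n : ℕ) : Polynomial ℤ :=
  ∑ w ∈ Finset.univ.filter (fun w : Fin (2 * n) → Bool => IsDyckB n w),
    Polynomial.X ^ areaB n w

/-!
A type `B` path splits at its last return to the diagonal into a Dyck path, a north step and a
shorter type `B` path. The area is additive along this splitting, the north step adding the
diagonal cells up to the height of the rest of the path, as far as the antidiagonal allows. Splitting twice writes a
type `B` path that is not a Dyck path as `d N d' N w'` with `w'` of length `2k`; regrouping `d`
and `d'` into the Dyck path `N d' E d` leaves exactly the factor `q ^ (2k + 1)`. The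
first-return decomposition of Dyck paths behind this regrouping is the same splitting, applied
after deleting the final east step.
-/

open Finset

def northCount (l : List Bool) (k : ℕ) : ℕ := (l.take k).count true

def eastCount (l : List Bool) (k : ℕ) : ℕ := (l.take k).count false

section PrefixCounts

variable {l d p : List Bool} {k : ℕ}

@[simp] lemma northCount_zero (l : List Bool) : northCount l 0 = 0 := by simp [northCount]

@[simp] lemma eastCount_zero (l : List Bool) : eastCount l 0 = 0 := by simp [eastCount]

@[simp] lemma northCount_cons_succ (x : Bool) (l : List Bool) (k : ℕ) :
    northCount (x :: l) (k + 1) = northCount l k + x.toNat := by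
  cases x <;> simp [northCount]

@[simp] lemma eastCount_cons_succ (x : Bool) (l : List Bool) (k : ℕ) :
    eastCount (x :: l) (k + 1) = eastCount l k + (!x).toNat := by
  cases x <;> simp [eastCount]

lemma northCount_add_eastCount (l : List Bool) (k : ℕ) :
    northCount l k + eastCount l k = min k l.length := by
  simp [northCount, eastCount, List.count_true_add_count_false]

lemma northCount_of_length_le (h : l.length ≤ k) : northCount l k = l.count true := by
  rw [northCount, List.take_of_length_le h]

lemma eastCount_of_length_le (h : l.length ≤ k) : eastCount l k = l.count false := by
  rw [eastCount, List.take_of_length_le h]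

lemma northCount_min_length (l : List Bool) (k : ℕ) :
    northCount l (min k l.length) = northCount l k := by
  rw [northCount, northCount, ← List.take_eq_take_min]

lemma eastCount_min_length (l : List Bool) (k : ℕ) :
    eastCount l (min k l.length) = eastCount l k := by
  rw [eastCount, eastCount, ← List.take_eq_take_min]

lemma northCount_le_count (l : List Bool) (k : ℕ) : northCount l k ≤ l.count true :=
  (List.take_sublist k l).count_le _

lemma eastCount_mono (l : List Bool) : Monotone (eastCount l) := fun _ _ h =>
  (List.take_sublist_take_left h).count_le _

lemma northCount_add (l : List Bool) (m k : ℕ) :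
    northCount l (m + k) = northCount l m + northCount (l.drop m) k := by
  rw [northCount, List.take_add, List.count_append]; rfl

lemma eastCount_add (l : List Bool) (m k : ℕ) :
    eastCount l (m + k) = eastCount l m + eastCount (l.drop m) k := by
  rw [eastCount, List.take_add, List.count_append]; rfl

lemma northCount_append (d p : List Bool) (k : ℕ) :
    northCount (d ++ p) k = northCount d k + northCount p (k - d.length) := by
  rw [northCount, List.take_append, List.count_append]; rfl

lemma eastCount_append (d p : List Bool) (k : ℕ) :
    eastCount (d ++ p) k = eastCount d k + eastCount p (k - d.length) := by
  rw [eastCount, List.take_append, List.count_append]; rfl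

lemma northCount_append_of_le_length (h : k ≤ d.length) :
    northCount (d ++ p) k = northCount d k := by
  simp [northCount_append, Nat.sub_eq_zero_of_le h]

lemma eastCount_append_of_le_length (h : k ≤ d.length) :
    eastCount (d ++ p) k = eastCount d k := by
  simp [eastCount_append, Nat.sub_eq_zero_of_le h]

lemma northCount_append_of_length_le (h : d.length ≤ k) :
    northCount (d ++ p) k = d.count true + northCount p (k - d.length) := by
  rw [northCount_append, northCount_of_length_le h]

lemma eastCount_append_of_length_le (h : d.length ≤ k) :
    eastCount (d ++ p) k = d.count false + eastCount p (k - d.length) := by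
  rw [eastCount_append, eastCount_of_length_le h]

lemma card_filter_lt_eq_count_take {m : ℕ} (w : Fin m → Bool) (b : Bool) (k : ℕ) :
    (univ.filter fun t : Fin m => (t : ℕ) < k ∧ w t = b).card =
      ((List.ofFn w).take k).count b := by
  induction m generalizing k with
  | zero => simp
  | succ m ih =>
    rw [Fin.card_filter_univ_succ, List.ofFn_succ]
    cases k with
    | zero => simp
    | succ k =>
      simp only [Fin.val_succ, Nat.add_lt_add_iff_right, ih, List.take_succ_cons, List.count_cons]
      by_cases h : w 0 = b <;> simp [h, add_comm]

end PrefixCounts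

def IsBallot (l : List Bool) : Prop := ∀ k, eastCount l k ≤ northCount l k

def IsStrictBallot (l : List Bool) : Prop :=
  ∀ k, 0 < k → k ≤ l.length → eastCount l k < northCount l k

section Ballot

variable {l d p s : List Bool}

lemma isBallot_iff_forall_le_length :
    IsBallot l ↔ ∀ k ≤ l.length, eastCount l k ≤ northCount l k := by
  refine ⟨fun h k _ => h k, fun h k => ?_⟩
  rw [← eastCount_min_length, ← northCount_min_length]
  exact h _ (min_le_right _ _)

lemma IsBallot.count_le (h : IsBallot l) : l.count false ≤ l.count true := by
  simpa [eastCount_of_length_le, northCount_of_length_le] using h l.length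

lemma IsBallot.take (h : IsBallot l) (n : ℕ) : IsBallot (l.take n) := fun k => by
  simpa [northCount, eastCount, List.take_take] using h (min k n)

lemma IsBallot.append (hd : IsBallot d) (hp : IsBallot p) : IsBallot (d ++ p) := fun k => by
  rcases le_total k d.length with hk | hk
  · rw [eastCount_append_of_le_length hk, northCount_append_of_le_length hk]
    exact hd k
  · rw [eastCount_append_of_length_le hk, northCount_append_of_length_le hk]
    exact add_le_add hd.count_le (hp _)

lemma IsBallot.append_false (h : IsBallot l) (hlt : l.count false < l.count true) :
    IsBallot (l ++ [false]) := fun k => by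
  rcases le_total k l.length with hk | hk
  · rw [eastCount_append_of_le_length hk, northCount_append_of_le_length hk]
    exact h k
  · rw [eastCount_append_of_length_le hk, northCount_append_of_length_le hk]
    have : eastCount [false] (k - l.length) ≤ 1 :=
      (List.count_le_length ..).trans (List.length_take_le' _ _)
    omega

lemma IsStrictBallot.isBallot (h : IsStrictBallot l) : IsBallot l :=
  isBallot_iff_forall_le_length.2 fun k hk => by
    rcases Nat.eq_zero_or_pos k with rfl | hk0
    · simp
    · exact (h k hk0 hk).le

lemma isStrictBallot_cons_iff {x : Bool} : IsStrictBallot (x :: s) ↔ x = true ∧ IsBallot s := by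
  rw [isBallot_iff_forall_le_length]
  constructor
  · intro h
    have hx := h 1 one_pos (by simp)
    cases x
    · simp at hx
    · refine ⟨rfl, fun k hk => ?_⟩
      simpa [Nat.lt_succ_iff] using h (k + 1) k.succ_pos (by simpa using hk)
  · rintro ⟨rfl, h⟩ k hk0 hk
    obtain ⟨k, rfl⟩ := Nat.exists_eq_add_of_lt hk0
    simpa [Nat.lt_succ_iff] using h k (by simpa using hk)

end Ballot

/-- `2 * lastReturn l` is the last time at which `l` is on the diagonal. -/
def lastReturn (l : List Bool) : ℕ :=
  Nat.findGreatest (fun a => northCount l (2 * a) = a) (l.length / 2)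

section LastReturn

variable {l d p : List Bool} {a : ℕ}

lemma two_mul_lastReturn_le (l : List Bool) : 2 * lastReturn l ≤ l.length := by
  have := Nat.findGreatest_le (P := fun a => northCount l (2 * a) = a) (l.length / 2)
  rw [lastReturn]
  omega

lemma northCount_lastReturn (l : List Bool) : northCount l (2 * lastReturn l) = lastReturn l :=
  Nat.findGreatest_spec (P := fun a => northCount l (2 * a) = a) (Nat.zero_le _) (by simp)

lemma isStrictBallot_drop_lastReturn (hl : IsBallot l) :
    IsStrictBallot (l.drop (2 * lastReturn l)) := by
  obtain ⟨a, ha⟩ : ∃ a, lastReturn l = a := ⟨_, rfl⟩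
  have hlen : 2 * a ≤ l.length := ha ▸ two_mul_lastReturn_le l
  have hNa : northCount l (2 * a) = a := ha ▸ northCount_lastReturn l
  have hgreatest : ∀ b, a < b → b ≤ l.length / 2 → northCount l (2 * b) ≠ b := fun b =>
    ha ▸ Nat.findGreatest_is_greatest
  have hEa := northCount_add_eastCount l (2 * a)
  rw [ha]
  intro k hk0 hk
  rw [List.length_drop] at hk
  have hpk := northCount_add_eastCount (l.drop (2 * a)) k
  have hl' := hl (2 * a + k)
  rw [northCount_add, eastCount_add] at hl'
  simp only [List.length_drop] at hpk
  by_contra hle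
  refine hgreatest (a + northCount (l.drop (2 * a)) k) (by omega) (by omega) ?_
  rw [show 2 * (a + northCount (l.drop (2 * a)) k) = 2 * a + k by omega, northCount_add, hNa]

lemma lastReturn_append (hN : d.count true = a) (hE : d.count false = a)
    (hp : IsStrictBallot p) : lastReturn (d ++ p) = a := by
  have hlen : d.length = 2 * a := by
    have := List.count_true_add_count_false d
    omega
  rw [lastReturn, Nat.findGreatest_eq_iff]
  refine ⟨by simp; omega, fun _ => ?_, fun b hab hb => ?_⟩
  · rw [northCount_append_of_length_le hlen.le, hlen]
    simpa
  · have hk : 2 * b - d.length ≤ p.length := by simp at hb; omega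
    have hs := hp (2 * b - d.length) (by omega) hk
    have hsum := northCount_add_eastCount p (2 * b - d.length)
    rw [northCount_append_of_length_le (by omega), hN]
    omega

end LastReturn

def words (m : ℕ) : Finset (List Bool) :=
  (univ : Finset (Fin m → Bool)).map ⟨List.ofFn, List.ofFn_injective⟩

noncomputable def ballots (m : ℕ) : Finset (List Bool) := (words m).filter IsBallot

noncomputable def strictBallots (m : ℕ) : Finset (List Bool) := (words m).filter IsStrictBallot

noncomputable def dyckPaths (a : ℕ) : Finset (List Bool) :=
  (words (2 * a)).filter fun l => IsBallot l ∧ l.count true = a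

section Decomposition

variable {R : Type*} [AddCommMonoid R] {l d p : List Bool} {m a : ℕ}

lemma mem_words : l ∈ words m ↔ l.length = m := by
  simp only [words, mem_map, mem_univ, true_and, Function.Embedding.coeFn_mk]
  refine ⟨?_, ?_⟩
  · rintro ⟨w, rfl⟩
    simp
  · rintro rfl
    exact ⟨fun i => l[i], List.ofFn_getElem⟩

lemma length_eq_two_mul_of_mem_dyckPaths (hd : d ∈ dyckPaths a) : d.length = 2 * a :=
  mem_words.1 (mem_filter.1 hd).1

lemma count_true_eq_of_mem_dyckPaths (hd : d ∈ dyckPaths a) : d.count true = a :=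
  (mem_filter.1 hd).2.2

lemma count_false_eq_of_mem_dyckPaths (hd : d ∈ dyckPaths a) : d.count false = a := by
  have := List.count_true_add_count_false d
  have := length_eq_two_mul_of_mem_dyckPaths hd
  have := count_true_eq_of_mem_dyckPaths hd
  omega

lemma dyckPaths_eq_filter_ballots (a : ℕ) :
    dyckPaths a = (ballots (2 * a)).filter (·.count true = a) := by
  rw [ballots, filter_filter]
  rfl

lemma take_lastReturn_mem_dyckPaths (hl : IsBallot l) :
    l.take (2 * lastReturn l) ∈ dyckPaths (lastReturn l) := by
  have := two_mul_lastReturn_le l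
  refine mem_filter.2 ⟨mem_words.2 (by simp; omega), hl.take _, northCount_lastReturn l⟩

lemma drop_lastReturn_mem_strictBallots (hl : l ∈ ballots m) :
    l.drop (2 * lastReturn l) ∈ strictBallots (m - 2 * lastReturn l) := by
  obtain ⟨hlen, hl⟩ := mem_filter.1 hl
  refine mem_filter.2 ⟨mem_words.2 ?_, isStrictBallot_drop_lastReturn hl⟩
  rw [List.length_drop, mem_words.1 hlen]

lemma append_mem_ballots (hd : d ∈ dyckPaths a) (hp : p ∈ strictBallots (m - 2 * a))
    (ha : 2 * a ≤ m) : d ++ p ∈ ballots m := by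
  obtain ⟨hplen, hp⟩ := mem_filter.1 hp
  have := length_eq_two_mul_of_mem_dyckPaths hd
  refine mem_filter.2 ⟨mem_words.2 ?_, (mem_filter.1 hd).2.1.append hp.isBallot⟩
  rw [List.length_append, mem_words.1 hplen]
  omega

theorem sum_ballots_eq_sum_dyckPaths_append (m : ℕ) (f : List Bool → R) :
    ∑ l ∈ ballots m, f l =
      ∑ a ∈ range (m / 2 + 1), ∑ d ∈ dyckPaths a,
        ∑ p ∈ strictBallots (m - 2 * a), f (d ++ p) := by
  rw [← sum_fiberwise_of_maps_to (g := lastReturn) (t := range (m / 2 + 1))]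
  · refine sum_congr rfl fun a ha => ?_
    rw [← sum_product' (f := fun d p => f (d ++ p))]
    apply sum_nbij' (fun l => (l.take (2 * a), l.drop (2 * a))) (fun x => x.1 ++ x.2)
    · intro l hl
      obtain ⟨hlm, rfl⟩ := mem_filter.1 hl
      exact mem_product.2 ⟨take_lastReturn_mem_dyckPaths (mem_filter.1 hlm).2,
        drop_lastReturn_mem_strictBallots hlm⟩
    · rintro ⟨d, p⟩ h
      obtain ⟨hd, hp⟩ := mem_product.1 h
      refine mem_filter.2 ⟨append_mem_ballots hd hp (by rw [mem_range] at ha; omega), ?_⟩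
      exact lastReturn_append (count_true_eq_of_mem_dyckPaths hd)
        (count_false_eq_of_mem_dyckPaths hd) (mem_filter.1 hp).2
    · intro l _
      exact List.take_append_drop _ l
    · rintro ⟨d, p⟩ h
      simp [← length_eq_two_mul_of_mem_dyckPaths (mem_product.1 h).1]
    · intro l _
      simp
  · intro l hl
    have := two_mul_lastReturn_le l
    rw [mem_range, mem_words.1 (mem_filter.1 hl).1] at *
    omega

lemma strictBallots_zero : strictBallots 0 = {[]} := by
  ext l
  simp only [strictBallots, mem_filter, mem_words, List.length_eq_zero_iff, mem_singleton,
    and_iff_left_iff_imp]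
  rintro rfl k hk hk'
  simp at hk'
  omega

lemma strictBallots_succ (m : ℕ) :
    strictBallots (m + 1) = (ballots m).map ⟨List.cons true, List.cons_injective⟩ := by
  ext p
  rcases p with _ | ⟨x, s⟩
  · simp [strictBallots, mem_words]
  · simp only [strictBallots, ballots, mem_filter, mem_words, mem_map, List.length_cons,
      isStrictBallot_cons_iff, Function.Embedding.coeFn_mk, List.cons.injEq]
    constructor
    · rintro ⟨hlen, rfl, hs⟩
      exact ⟨s, ⟨by omega, hs⟩, rfl, rfl⟩
    · rintro ⟨s, ⟨hlen, hs⟩, rfl, rfl⟩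
      exact ⟨by omega, rfl, hs⟩

lemma sum_strictBallots_succ (m : ℕ) (f : List Bool → R) :
    ∑ p ∈ strictBallots (m + 1), f p = ∑ s ∈ ballots m, f (true :: s) := by
  rw [strictBallots_succ, sum_map]
  rfl

lemma dyckPaths_succ (a : ℕ) :
    dyckPaths (a + 1) = ((ballots (2 * a + 1)).filter (·.count true = a + 1)).map
      ⟨(· ++ [false]), List.append_left_injective [false]⟩ := by
  ext l
  simp only [dyckPaths, ballots, mem_filter, mem_words, mem_map, Function.Embedding.coeFn_mk]
  constructor
  · rintro ⟨hlen, hl, hcount⟩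
    rcases List.eq_nil_or_concat' l with rfl | ⟨L, b, rfl⟩
    · simp at hlen
    simp only [List.length_append, List.length_singleton] at hlen
    have hL : IsBallot L := by simpa using hl.take L.length
    have hb : b = false := by
      by_contra hb
      rw [Bool.not_eq_false] at hb
      subst hb
      have := hl L.length
      rw [eastCount_append_of_le_length le_rfl, northCount_append_of_le_length le_rfl,
        eastCount_of_length_le le_rfl, northCount_of_length_le le_rfl] at this
      have := List.count_true_add_count_false L
      simp at hcount
      omega
    subst hb
    exact ⟨L, ⟨⟨by omega, hL⟩, by simpa using hcount⟩, rfl⟩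
  · rintro ⟨L, ⟨⟨hlen, hL⟩, hcount⟩, rfl⟩
    have := List.count_true_add_count_false L
    exact ⟨by simp; omega, hL.append_false (by omega), by simpa using hcount⟩

lemma sum_dyckPaths_succ (a : ℕ) (f : List Bool → R) :
    ∑ l ∈ dyckPaths (a + 1), f l = ∑ l ∈ ballots (2 * a + 1),
      if l.count true = a + 1 then f (l ++ [false]) else 0 := by
  rw [dyckPaths_succ, sum_map, sum_filter]
  rfl

end Decomposition

def Below (l : List Bool) (i j : ℕ) : Prop := ∃ k, eastCount l k < i ∧ j ≤ northCount l k

section Below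

variable {l d p s : List Bool} {i j a : ℕ}

lemma Below.le_count_true (h : Below l i j) : j ≤ l.count true :=
  let ⟨k, _, hk⟩ := h
  hk.trans (northCount_le_count l k)

lemma below_append_false : Below (l ++ [false]) i j ↔ Below l i j := by
  have hN : ∀ k, northCount (l ++ [false]) k = northCount l k := fun k => by
    rw [northCount_append]
    cases k - l.length <;> simp [northCount]
  constructor
  · rintro ⟨k, hE, hN'⟩
    refine ⟨k, ?_, by rwa [← hN]⟩
    rw [eastCount_append] at hE
    omega
  · rintro ⟨k, hE, hN'⟩
    refine ⟨min k l.length, ?_, ?_⟩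
    · rwa [eastCount_append_of_le_length (min_le_right _ _), eastCount_min_length]
    · rwa [hN, northCount_min_length]

lemma below_cons_true : Below (true :: s) i (j + 1) ↔ Below s i j := by
  constructor
  · rintro ⟨_ | k, hE, hN⟩
    · simp at hN
    · exact ⟨k, by simpa using hE, by simpa using hN⟩
  · rintro ⟨k, hE, hN⟩
    exact ⟨k + 1, by simpa using hE, by simpa using hN⟩

lemma below_self_iff (hs : IsBallot s) (hi : 0 < i) : Below s i i ↔ i ≤ s.count true := by
  refine ⟨Below.le_count_true, fun h => ?_⟩
  -- The witness is the first time `k + 1` at height `i`: step `k` goes north, so the east count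
  -- at `k + 1` is the one at `k`, at most the height `< i` there.
  have hex : ∃ k, i ≤ northCount s k := ⟨s.length, by rwa [northCount_of_length_le le_rfl]⟩
  obtain ⟨k, hk⟩ : ∃ k, Nat.find hex = k + 1 :=
    Nat.exists_eq_add_one.2 (Nat.pos_of_ne_zero fun h0 => by
      have := Nat.find_spec hex
      rw [h0, northCount_zero] at this
      omega)
  have hreach : i ≤ northCount s (k + 1) := hk ▸ Nat.find_spec hex
  have hbefore : northCount s k < i := not_le.1 (Nat.find_min hex (by omega))
  have := northCount_add_eastCount s k
  have := northCount_add_eastCount s (k + 1)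
  have := eastCount_mono s k.le_succ
  have := hs k
  exact ⟨k + 1, by omega, hreach⟩

lemma below_append_of_le_count_false (h : i ≤ d.count false) :
    Below (d ++ p) i j ↔ Below d i j := by
  constructor
  · rintro ⟨k, hE, hN⟩
    rcases le_or_gt k d.length with hk | hk
    · rw [eastCount_append_of_le_length hk] at hE
      rw [northCount_append_of_le_length hk] at hN
      exact ⟨k, hE, hN⟩
    · rw [eastCount_append_of_length_le hk.le] at hE
      omega
  · rintro ⟨k, hE, hN⟩
    rcases le_or_gt k d.length with hk | hk
    · exact ⟨k, by rwa [eastCount_append_of_le_length hk],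
        by rwa [northCount_append_of_le_length hk]⟩
    · rw [eastCount_of_length_le hk.le] at hE
      omega

lemma below_append_add (hN : d.count true = a) (hE : d.count false = a) (hj : 0 < j) :
    Below (d ++ p) (i + a) (j + a) ↔ Below p i j := by
  constructor
  · rintro ⟨k, hEk, hNk⟩
    rcases le_or_gt k d.length with hk | hk
    · rw [northCount_append_of_le_length hk] at hNk
      have := northCount_le_count d k
      omega
    · rw [eastCount_append_of_length_le hk.le] at hEk
      rw [northCount_append_of_length_le hk.le] at hNk
      exact ⟨k - d.length, by omega, by omega⟩
  · rintro ⟨k, hEk, hNk⟩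
    refine ⟨d.length + k, ?_, ?_⟩
    · rw [eastCount_append_of_length_le (by omega), Nat.add_sub_cancel_left]
      omega
    · rw [northCount_append_of_length_le (by omega), Nat.add_sub_cancel_left]
      omega

end Below

/-- For a path of length `M` these are the cells of its type `B` area; the antidiagonal bound
`i + j ≤ M + 1` is void for a Dyck path, so they are also the cells of its type `A` area. -/
noncomputable def cells (M : ℕ) (l : List Bool) : Finset (ℕ × ℕ) :=
  (range (M + 2) ×ˢ range (M + 2)).filter fun c =>
    1 ≤ c.1 ∧ c.1 < c.2 ∧ c.1 + c.2 ≤ M + 1 ∧ Below l c.1 c.2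

noncomputable def area (M : ℕ) (l : List Bool) : ℕ := (cells M l).card

section Area

variable {M : ℕ} {l d p s u : List Bool} {a b : ℕ}

lemma mem_cells {c : ℕ × ℕ} :
    c ∈ cells M l ↔ 1 ≤ c.1 ∧ c.1 < c.2 ∧ c.1 + c.2 ≤ M + 1 ∧ Below l c.1 c.2 := by
  rw [cells, mem_filter, mem_product, mem_range, mem_range]
  exact ⟨And.right, fun h => ⟨⟨by omega, by omega⟩, h⟩⟩

lemma area_zero : area 0 l = 0 := by
  refine card_eq_zero.2 (eq_empty_of_forall_notMem fun c hc => ?_)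
  have := mem_cells.1 hc
  omega

lemma area_append_false : area M (l ++ [false]) = area M l := by
  simp only [area, cells, below_append_false]

lemma area_eq_area_of_count_le {M' : ℕ} (h : 2 * l.count true ≤ M + 2)
    (h' : 2 * l.count true ≤ M' + 2) : area M l = area M' l := by
  rw [area, area]
  congr 1
  ext c
  simp only [mem_cells]
  constructor <;> rintro ⟨h1, h2, -, h4⟩ <;>
    exact ⟨h1, h2, by have := h4.le_count_true; omega, h4⟩

lemma filter_cells_cons_true_diag (hs : IsBallot s) :
    (cells M (true :: s)).filter (fun c => c.1 + 1 = c.2) =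
      (Icc 1 (min (M / 2) (s.count true))).map
        ⟨fun i => (i, i + 1), fun _ _ h => by simpa using h⟩ := by
  ext ⟨i, j⟩
  simp only [mem_filter, mem_cells, mem_map, mem_Icc]
  constructor
  · rintro ⟨⟨h1, -, h3, h4⟩, rfl⟩
    rw [below_cons_true, below_self_iff hs h1] at h4
    exact ⟨i, ⟨h1, by omega⟩, rfl⟩
  · rintro ⟨i, ⟨h1, h2⟩, h⟩
    cases h
    rw [below_cons_true, below_self_iff hs h1]
    omega

lemma card_filter_cells_cons_true_not_diag :
    ((cells M (true :: s)).filter (fun c => ¬ c.1 + 1 = c.2)).card = area (M - 1) s := by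
  apply card_nbij' (fun c => (c.1, c.2 - 1)) (fun c => (c.1, c.2 + 1))
  · rintro ⟨i, j⟩ hc
    simp only [mem_coe, mem_filter, mem_cells] at hc ⊢
    obtain ⟨⟨h1, h2, h3, h4⟩, h5⟩ := hc
    obtain ⟨j, rfl⟩ : ∃ j', j = j' + 1 := ⟨j - 1, by omega⟩
    rw [below_cons_true] at h4
    exact ⟨h1, by omega, by omega, by simpa using h4⟩
  · rintro ⟨i, j⟩ hc
    simp only [mem_coe, mem_filter, mem_cells] at hc ⊢
    obtain ⟨h1, h2, h3, h4⟩ := hc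
    exact ⟨⟨h1, by omega, by omega, below_cons_true.2 h4⟩, by omega⟩
  · rintro ⟨i, j⟩ hc
    simp only [mem_coe, mem_filter, mem_cells] at hc
    simp only [Prod.mk.injEq, true_and]
    omega
  · rintro ⟨i, j⟩ -
    simp

lemma area_cons_true (hs : IsBallot s) :
    area M (true :: s) = min (M / 2) (s.count true) + area (M - 1) s := by
  rw [area, ← card_filter_add_card_filter_not (p := fun c => c.1 + 1 = c.2),
    filter_cells_cons_true_diag hs, card_map, Nat.card_Icc, Nat.add_sub_cancel,
    card_filter_cells_cons_true_not_diag]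

lemma filter_cells_append_le (hN : d.count true = a) (hE : d.count false = a) :
    (cells M (d ++ p)).filter (fun c => c.1 ≤ a) = cells M d := by
  ext c
  simp only [mem_filter, mem_cells]
  constructor
  · rintro ⟨⟨h1, h2, h3, h4⟩, h5⟩
    exact ⟨h1, h2, h3, (below_append_of_le_count_false (by omega)).1 h4⟩
  · rintro ⟨h1, h2, h3, h4⟩
    have := h4.le_count_true
    exact ⟨⟨h1, h2, h3, (below_append_of_le_count_false (by omega)).2 h4⟩, by omega⟩

lemma card_filter_cells_append_not_le (hN : d.count true = a) (hE : d.count false = a) :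
    ((cells M (d ++ p)).filter (fun c => ¬ c.1 ≤ a)).card = area (M - 2 * a) p := by
  apply card_nbij' (fun c => (c.1 - a, c.2 - a)) (fun c => (c.1 + a, c.2 + a))
  · rintro ⟨i, j⟩ hc
    simp only [mem_coe, mem_filter, mem_cells] at hc ⊢
    obtain ⟨⟨h1, h2, h3, h4⟩, h5⟩ := hc
    obtain ⟨i, rfl⟩ : ∃ i', i = i' + a := ⟨i - a, by omega⟩
    obtain ⟨j, rfl⟩ : ∃ j', j = j' + a := ⟨j - a, by omega⟩
    rw [below_append_add hN hE (by omega)] at h4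
    simp only [Nat.add_sub_cancel]
    exact ⟨by omega, by omega, by omega, h4⟩
  · rintro ⟨i, j⟩ hc
    simp only [mem_coe, mem_filter, mem_cells] at hc ⊢
    obtain ⟨h1, h2, h3, h4⟩ := hc
    refine ⟨⟨by omega, by omega, by omega, ?_⟩, by omega⟩
    exact (below_append_add hN hE (by omega)).2 h4
  · rintro ⟨i, j⟩ hc
    simp only [mem_coe, mem_filter, mem_cells] at hc
    simp only [Prod.mk.injEq]
    omega
  · rintro ⟨i, j⟩ -
    simp

lemma area_append (hN : d.count true = a) (hE : d.count false = a) :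
    area M (d ++ p) = area M d + area (M - 2 * a) p := by
  rw [area, ← card_filter_add_card_filter_not (p := fun c => c.1 ≤ a),
    filter_cells_append_le hN hE, card_filter_cells_append_not_le hN hE]
  rfl

lemma area_append_cons_true_append_false (hN : d.count true = a) (hE : d.count false = a)
    (hu : IsBallot u) (hb : u.count true = b) :
    area (2 * (a + b + 1)) (d ++ true :: u ++ [false]) =
      area (2 * a) d + b + area (2 * b) u := by
  rw [area_append_false, area_append hN hE, area_cons_true hu,
    area_eq_area_of_count_le (l := d) (M' := 2 * a) (by omega) (by omega),
    area_eq_area_of_count_le (l := u) (M' := 2 * b) (by omega) (by omega), hb,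
    min_eq_right (by omega)]
  ring

end Area

open Polynomial

noncomputable def dyckPoly (a : ℕ) : ℤ[X] := ∑ d ∈ dyckPaths a, X ^ area (2 * a) d

noncomputable def ballotPoly (m : ℕ) : ℤ[X] := ∑ l ∈ ballots m, X ^ area m l

noncomputable def strictBallotPoly (m : ℕ) : ℤ[X] := ∑ p ∈ strictBallots m, X ^ area m p

lemma ballotPoly_eq_sum_dyckPoly_mul (m : ℕ) :
    ballotPoly m = ∑ a ∈ range (m / 2 + 1), dyckPoly a * strictBallotPoly (m - 2 * a) := by
  rw [ballotPoly, sum_ballots_eq_sum_dyckPaths_append]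
  refine sum_congr rfl fun a ha => ?_
  rw [dyckPoly, strictBallotPoly, sum_mul_sum]
  refine sum_congr rfl fun d hd => sum_congr rfl fun p _ => ?_
  have hN := count_true_eq_of_mem_dyckPaths hd
  rw [area_append hN (count_false_eq_of_mem_dyckPaths hd), pow_add,
    area_eq_area_of_count_le (M' := 2 * a) (by rw [mem_range] at ha; omega) (by omega)]

lemma strictBallotPoly_zero : strictBallotPoly 0 = 1 := by
  simp [strictBallotPoly, strictBallots_zero, area_zero]

lemma strictBallotPoly_succ (m : ℕ) :
    strictBallotPoly (m + 1) = X ^ ((m + 1) / 2) * ballotPoly m := by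
  rw [strictBallotPoly, sum_strictBallots_succ, ballotPoly, mul_sum]
  refine sum_congr rfl fun s hs => ?_
  obtain ⟨hlen, hs⟩ := mem_filter.1 hs
  have := hs.count_le
  have := List.count_true_add_count_false s
  rw [mem_words] at hlen
  rw [area_cons_true hs, min_eq_left (by omega), pow_add, Nat.add_sub_cancel]

lemma dyckPoly_succ (M : ℕ) :
    dyckPoly (M + 1) = ∑ a ∈ range (M + 1), X ^ (M - a) * dyckPoly a * dyckPoly (M - a) := by
  rw [dyckPoly, sum_dyckPaths_succ, sum_ballots_eq_sum_dyckPaths_append,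
    show (2 * M + 1) / 2 + 1 = M + 1 by omega]
  refine sum_congr rfl fun a ha => ?_
  rw [mem_range] at ha
  rw [mul_assoc, dyckPoly, dyckPoly, sum_mul_sum, mul_sum,
    show 2 * M + 1 - 2 * a = 2 * (M - a) + 1 by omega]
  refine sum_congr rfl fun d hd => ?_
  have hN := count_true_eq_of_mem_dyckPaths hd
  rw [sum_strictBallots_succ (R := ℤ[X]), dyckPaths_eq_filter_ballots, sum_filter, mul_sum]
  refine sum_congr rfl fun u hu => ?_
  have hcount : (d ++ true :: u).count true = M + 1 ↔ u.count true = M - a := by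
    simp [hN]
    omega
  rw [if_congr hcount rfl rfl]
  split_ifs with hc
  · rw [show 2 * (M + 1) = 2 * (a + (M - a) + 1) by omega, area_append_cons_true_append_false hN
      (count_false_eq_of_mem_dyckPaths hd) (mem_filter.1 hu).2 hc, pow_add, pow_add]
    ring
  · rw [mul_zero]

lemma ballotPoly_two_mul_add_one (r : ℕ) :
    ballotPoly (2 * r + 1) =
      ∑ k ∈ range (r + 1), X ^ k * dyckPoly (r - k) * ballotPoly (2 * k) := by
  rw [ballotPoly_eq_sum_dyckPoly_mul, show (2 * r + 1) / 2 + 1 = r + 1 by omega,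
    ← sum_range_reflect]
  refine sum_congr rfl fun k hk => ?_
  rw [mem_range] at hk
  rw [show 2 * r + 1 - 2 * (r + 1 - 1 - k) = 2 * k + 1 by omega, strictBallotPoly_succ,
    show (2 * k + 1) / 2 = k by omega, show r + 1 - 1 - k = r - k by omega]
  ring

lemma ballotPoly_two_mul_eq_sum_odd (n : ℕ) :
    ballotPoly (2 * n) = dyckPoly n +
      ∑ a ∈ range n, X ^ (n - a) * dyckPoly a * ballotPoly (2 * (n - a - 1) + 1) := by
  rw [ballotPoly_eq_sum_dyckPoly_mul, show 2 * n / 2 + 1 = n + 1 by omega, sum_range_succ,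
    Nat.sub_self, strictBallotPoly_zero, mul_one, add_comm, add_right_inj]
  refine sum_congr rfl fun a ha => ?_
  rw [mem_range] at ha
  rw [show 2 * n - 2 * a = 2 * (n - a - 1) + 1 + 1 by omega, strictBallotPoly_succ,
    show (2 * (n - a - 1) + 1 + 1) / 2 = n - a by omega]
  ring

lemma ballotPoly_two_mul (n : ℕ) :
    ballotPoly (2 * n) = dyckPoly n +
      ∑ k ∈ range n, X ^ (2 * k + 1) * ballotPoly (2 * k) * dyckPoly (n - k) := by
  rw [ballotPoly_two_mul_eq_sum_odd, add_right_inj]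
  calc ∑ a ∈ range n, X ^ (n - a) * dyckPoly a * ballotPoly (2 * (n - a - 1) + 1)
      = ∑ a ∈ range n, ∑ k ∈ range (n - a), X ^ (2 * k + 1) * ballotPoly (2 * k) *
          (X ^ (n - k - 1 - a) * dyckPoly a * dyckPoly (n - k - 1 - a)) := by
        refine sum_congr rfl fun a ha => ?_
        rw [mem_range] at ha
        rw [ballotPoly_two_mul_add_one, mul_sum, show n - a - 1 + 1 = n - a by omega]
        refine sum_congr rfl fun k hk => ?_
        rw [mem_range] at hk
        rw [show n - a - 1 - k = n - k - 1 - a by omega,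
          show n - a = (k + 1) + (n - k - 1 - a) by omega]
        ring
    _ = ∑ k ∈ range n, ∑ a ∈ range (n - k), X ^ (2 * k + 1) * ballotPoly (2 * k) *
          (X ^ (n - k - 1 - a) * dyckPoly a * dyckPoly (n - k - 1 - a)) :=
        sum_comm' fun a k => by simp only [mem_range]; omega
    _ = ∑ k ∈ range n, X ^ (2 * k + 1) * ballotPoly (2 * k) * dyckPoly (n - k) := by
        refine sum_congr rfl fun k hk => ?_
        rw [mem_range] at hk
        rw [← mul_sum, show n - k = n - k - 1 + 1 by omega, dyckPoly_succ, Nat.add_sub_cancel]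

lemma countN_eq_northCount {m : ℕ} (w : Fin m → Bool) (k : ℕ) :
    countN w k = northCount (List.ofFn w) k :=
  card_filter_lt_eq_count_take w true k

lemma countE_eq_eastCount {m : ℕ} (w : Fin m → Bool) (k : ℕ) :
    countE w k = eastCount (List.ofFn w) k :=
  card_filter_lt_eq_count_take w false k

lemma cellBelow_iff_below {m : ℕ} (w : Fin m → Bool) (i j : ℕ) :
    CellBelow w i j ↔ Below (List.ofFn w) i j := by
  simp only [CellBelow, Below, countN_eq_northCount, countE_eq_eastCount]

lemma isDyckB_iff (n : ℕ) (w : Fin (2 * n) → Bool) :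
    IsDyckB n w ↔ IsBallot (List.ofFn w) := by
  simp only [IsDyckB, IsBallot, countN_eq_northCount, countE_eq_eastCount]

lemma isDyckA_iff (n : ℕ) (w : Fin (2 * n) → Bool) :
    IsDyckA n w ↔ IsBallot (List.ofFn w) ∧ (List.ofFn w).count true = n := by
  rw [IsDyckA, ← isDyckB_iff, countN_eq_northCount,
    northCount_of_length_le (List.length_ofFn ▸ le_rfl), and_comm]
  rfl

lemma areaB_eq_area (n : ℕ) (w : Fin (2 * n) → Bool) :
    areaB n w = area (2 * n) (List.ofFn w) := by
  rw [areaB, area, ← Set.ncard_coe_finset]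
  congr 1
  ext c
  simp only [Set.mem_ofPred_eq, mem_coe, mem_cells, cellBelow_iff_below]
  constructor <;> rintro ⟨h1, h2, h3, h4⟩ <;> exact ⟨h1, h2, by omega, h4⟩

lemma areaA_eq_area {n : ℕ} {w : Fin (2 * n) → Bool} (hw : IsDyckA n w) :
    areaA w = area (2 * n) (List.ofFn w) := by
  rw [areaA, area, ← Set.ncard_coe_finset]
  congr 1
  ext c
  simp only [Set.mem_ofPred_eq, mem_coe, mem_cells, cellBelow_iff_below]
  have := ((isDyckA_iff n w).1 hw).2
  constructor
  · rintro ⟨h1, h2, h3⟩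
    exact ⟨h1, h2, by have := h3.le_count_true; omega, h3⟩
  · rintro ⟨h1, h2, -, h3⟩
    exact ⟨h1, h2, h3⟩

lemma catA_eq_dyckPoly (n : ℕ) : CatA n = dyckPoly n := by
  rw [CatA, dyckPoly, dyckPaths, words, filter_map, sum_map]
  refine sum_congr (by ext; simp [isDyckA_iff]) fun w hw => ?_
  rw [areaA_eq_area ((isDyckA_iff n w).2 (mem_filter.1 hw).2)]
  rfl

lemma catB_eq_ballotPoly (n : ℕ) : CatB n = ballotPoly (2 * n) := by
  rw [CatB, ballotPoly, ballots, words, filter_map, sum_map]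
  refine sum_congr (by ext; simp [isDyckB_iff]) fun w _ => ?_
  rw [areaB_eq_area]
  rfl

theorem catB_recurrence_general (n : ℕ) :
    CatB n = CatA n + ∑ k ∈ Finset.range n,
      Polynomial.X ^ (2 * k + 1) * CatB k * CatA (n - k) := by
  simp only [catB_eq_ballotPoly, catA_eq_dyckPoly]
  exact ballotPoly_two_mul n

/-- For every `n ≥ 1`,
`Cat_{B_n}(q) = Cat_n(q) + ∑_{k=0}^{n-1} q^{2k+1} Cat_{B_k}(q) Cat_{n-k}(q)`. -/
theorem catB_recurrence (n : ℕ) (hn : 1 ≤ n) :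
    CatB n = CatA n + ∑ k ∈ Finset.range n,
      Polynomial.X ^ (2 * k + 1) * CatB k * CatA (n - k) :=
  catB_recurrence_general n

end Stmt
end

section
/- For every n ≥ 1 and every integer k with 0 ≤ k ≤ n(n−1), the number of Dyck paths of length n with major index k equals the number of Dyck paths of length n with major index n(n−1) − k; that is, the generating polynomial Σ_{w ∈ D_n} q^{maj(w)} (which equals the q-Catalan number (1/[n+1]_q)·[2n choose n]_q) has a symmetric sequence of coefficients centered at n(n−1)/2. -/
open scoped Classical

namespace Stmt

section Cnt

variable {m : ℕ}

/-- generic count -/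
def cnt (w : Fin m → Bool) (b : Bool) (k : ℕ) : ℕ :=
  (Finset.univ.filter (fun t : Fin m => (t : ℕ) < k ∧ w t = b)).card

lemma countN_eq_cnt (w : Fin m → Bool) (k : ℕ) : countN w k = cnt w true k := rfl
lemma countE_eq_cnt (w : Fin m → Bool) (k : ℕ) : countE w k = cnt w false k := rfl

lemma cnt_zero (w : Fin m → Bool) (b : Bool) : cnt w b 0 = 0 := by
  simp [cnt]

lemma cnt_succ (w : Fin m → Bool) (b : Bool) {k : ℕ} (h : k < m) :
    cnt w b (k + 1) = cnt w b k + (if w ⟨k, h⟩ = b then 1 else 0) := by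
  classical
  unfold cnt
  rcases eq_or_ne (w ⟨k, h⟩) b with hb | hb
  · rw [if_pos hb]
    have : (Finset.univ.filter (fun t : Fin m => (t : ℕ) < k + 1 ∧ w t = b)) =
        insert ⟨k, h⟩ (Finset.univ.filter (fun t : Fin m => (t : ℕ) < k ∧ w t = b)) := by
      ext t
      simp only [Finset.mem_filter, Finset.mem_univ, true_and, Finset.mem_insert]
      constructor
      · rintro ⟨hlt, hwb⟩
        rcases Nat.lt_succ_iff_lt_or_eq.mp hlt with h' | h'
        · exact Or.inr ⟨h', hwb⟩
        · left; exact Fin.ext h'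
      · rintro (rfl | ⟨hlt, hwb⟩)
        · exact ⟨Nat.lt_succ_self _, hb⟩
        · exact ⟨Nat.lt_succ_of_lt hlt, hwb⟩
    rw [this, Finset.card_insert_of_notMem (by simp)]
  · rw [if_neg hb, add_zero]
    congr 1
    apply Finset.filter_congr
    intro t _
    constructor
    · rintro ⟨hlt, hwb⟩
      rcases Nat.lt_succ_iff_lt_or_eq.mp hlt with h' | h'
      · exact ⟨h', hwb⟩
      · exact absurd (by rw [show t = (⟨k, h⟩ : Fin m) from Fin.ext h'] at hwb; exact hwb) hb
    · rintro ⟨hlt, hwb⟩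
      exact ⟨Nat.lt_succ_of_lt hlt, hwb⟩

lemma cnt_of_ge (w : Fin m → Bool) (b : Bool) {k : ℕ} (h : m ≤ k) :
    cnt w b k = cnt w b m := by
  unfold cnt
  congr 1
  apply Finset.filter_congr
  intro t _
  have ht : (t : ℕ) < m := t.isLt
  constructor
  · rintro ⟨_, hb⟩; exact ⟨ht, hb⟩
  · rintro ⟨_, hb⟩; exact ⟨lt_of_lt_of_le ht h, hb⟩

lemma cnt_mono (w : Fin m → Bool) (b : Bool) {k l : ℕ} (h : k ≤ l) :
    cnt w b k ≤ cnt w b l := by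
  apply Finset.card_le_card
  intro t
  simp only [Finset.mem_filter, Finset.mem_univ, true_and]
  rintro ⟨hlt, hb⟩
  exact ⟨lt_of_lt_of_le hlt h, hb⟩

lemma card_filter_lt (k : ℕ) :
    (Finset.univ.filter (fun t : Fin m => (t : ℕ) < k)).card = min k m := by
  rcases le_total k m with h | h
  · rw [min_eq_left h]
    have : (Finset.univ.filter (fun t : Fin m => (t : ℕ) < k)) =
        (Finset.range k).attachFin (fun x hx => lt_of_lt_of_le (Finset.mem_range.mp hx) h) := by
      ext t
      simp [Finset.mem_attachFin]
    rw [this, Finset.card_attachFin, Finset.card_range]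
  · rw [min_eq_right h]
    have : (Finset.univ.filter (fun t : Fin m => (t : ℕ) < k)) = Finset.univ := by
      apply Finset.filter_true_of_mem
      intro t _
      exact lt_of_lt_of_le t.isLt h
    rw [this, Finset.card_univ, Fintype.card_fin]

lemma cnt_add_cnt (w : Fin m → Bool) (k : ℕ) :
    cnt w true k + cnt w false k = min k m := by
  classical
  rw [← card_filter_lt (m := m) k]
  unfold cnt
  rw [← Finset.card_union_of_disjoint]
  · congr 1
    ext t
    simp only [Finset.mem_union, Finset.mem_filter, Finset.mem_univ, true_and]
    constructor
    · rintro (⟨h, _⟩ | ⟨h, _⟩) <;> exact h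
    · intro h
      cases hw : w t
      · exact Or.inr ⟨h, rfl⟩
      · exact Or.inl ⟨h, rfl⟩
  · rw [Finset.disjoint_filter]
    rintro t _ ⟨_, ht⟩ ⟨_, hf⟩
    rw [ht] at hf; exact Bool.noConfusion hf

lemma cnt_congr {w₁ w₂ : Fin m → Bool} (b : Bool) {k : ℕ}
    (h : ∀ t : Fin m, (t : ℕ) < k → w₁ t = w₂ t) : cnt w₁ b k = cnt w₂ b k := by
  unfold cnt
  congr 1
  apply Finset.filter_congr
  intro t _
  constructor
  · rintro ⟨hlt, hb⟩; exact ⟨hlt, (h t hlt) ▸ hb⟩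
  · rintro ⟨hlt, hb⟩; exact ⟨hlt, (h t hlt) ▸ hb⟩

end Cnt



section Des
variable {m : ℕ} {w : Fin m → Bool} {i j : ℕ}

lemma mem_pathDes {i : ℕ} :
    i ∈ pathDes w ↔ 0 < i ∧ ∃ h : i < m,
      w ⟨i - 1, Nat.lt_of_le_of_lt (Nat.sub_le i 1) h⟩ = false ∧ w ⟨i, h⟩ = true := by
  unfold pathDes
  simp only [Finset.mem_filter, Finset.mem_Ioo]
  constructor
  · rintro ⟨⟨h0, _⟩, h⟩; exact ⟨h0, h⟩
  · rintro ⟨h0, h⟩; exact ⟨⟨h0, h.1⟩, h⟩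

end Des
section DesMono
variable {m : ℕ} {w : Fin m → Bool} {i j : ℕ}

lemma des_lt (hi : i ∈ pathDes w) : i < m := by
  rcases mem_pathDes.mp hi with ⟨_, h, _⟩; exact h

lemma des_pos (hi : i ∈ pathDes w) : 0 < i := (mem_pathDes.mp hi).1

lemma cntE_des (hi : i ∈ pathDes w) :
    cnt w false i = cnt w false (i - 1) + 1 := by
  rcases mem_pathDes.mp hi with ⟨h0, h, hE, _⟩
  have h1 : i - 1 < m := Nat.lt_of_le_of_lt (Nat.sub_le i 1) h
  have := cnt_succ w false h1
  rw [Nat.sub_add_cancel h0] at this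
  rw [this, if_pos hE]

lemma cntN_des (hi : i ∈ pathDes w) :
    cnt w true (i + 1) = cnt w true i + 1 := by
  rcases mem_pathDes.mp hi with ⟨h0, h, _, hN⟩
  rw [cnt_succ w true h, if_pos hN]

lemma des_cntE_lt (hj : j ∈ pathDes w) (hij : i < j) :
    cnt w false i < cnt w false j := by
  have h1 : cnt w false i ≤ cnt w false (j - 1) :=
    cnt_mono w false (Nat.le_sub_one_of_lt hij)
  rw [cntE_des hj]
  omega

lemma des_cntN_lt (hi : i ∈ pathDes w) (hij : i < j) :
    cnt w true i < cnt w true j := by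
  have h1 : cnt w true (i + 1) ≤ cnt w true j := cnt_mono w true hij
  rw [cntN_des hi] at h1
  omega

lemma des_lt_iff_cntE (hi : i ∈ pathDes w) (hj : j ∈ pathDes w) :
    i < j ↔ cnt w false i < cnt w false j := by
  constructor
  · exact des_cntE_lt hj
  · intro h
    by_contra hle
    push_neg at hle
    rcases eq_or_lt_of_le hle with rfl | hlt
    · omega
    · exact absurd (des_cntE_lt hi hlt) (by omega)

lemma des_lt_iff_cntN (hi : i ∈ pathDes w) (hj : j ∈ pathDes w) :
    i < j ↔ cnt w true i < cnt w true j := by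
  constructor
  · exact des_cntN_lt hi
  · intro h
    by_contra hle
    push_neg at hle
    rcases eq_or_lt_of_le hle with rfl | hlt
    · omega
    · exact absurd (des_cntN_lt hj hlt) (by omega)

lemma des_injOn_cntE :
    ∀ i ∈ pathDes w, ∀ j ∈ pathDes w, cnt w false i = cnt w false j → i = j := by
  intro i hi j hj h
  by_contra hne
  rcases Nat.lt_or_ge i j with hlt | hge
  · exact absurd (des_cntE_lt hj hlt) (by omega)
  · rcases eq_or_lt_of_le hge with h' | hlt
    · omega
    · exact absurd (des_cntE_lt hi hlt) (by omega)

lemma des_injOn_cntN :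
    ∀ i ∈ pathDes w, ∀ j ∈ pathDes w, cnt w true i = cnt w true j → i = j := by
  intro i hi j hj h
  by_contra hne
  rcases Nat.lt_or_ge i j with hlt | hge
  · exact absurd (des_cntN_lt hi hlt) (by omega)
  · rcases eq_or_lt_of_le hge with h' | hlt
    · omega
    · exact absurd (des_cntN_lt hj hlt) (by omega)

lemma cnt_split_des (hi : i ∈ pathDes w) :
    cnt w true i + cnt w false i = i := by
  rw [cnt_add_cnt, min_eq_left (le_of_lt (des_lt hi))]

end DesMono



/-- x-coordinates of valleys -/
def Xd {m : ℕ} (w : Fin m → Bool) : Finset ℕ := (pathDes w).image (fun i => cnt w false i)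
/-- y-coordinates of valleys -/
def Yd {m : ℕ} (w : Fin m → Bool) : Finset ℕ := (pathDes w).image (fun i => cnt w true i)

section Dyck
variable {n : ℕ} {w : Fin (2 * n) → Bool} {i j : ℕ}

lemma dyck_total (hw : IsDyckA n w) : cnt w true (2 * n) = n := hw.1

lemma dyck_prefix (hw : IsDyckA n w) (k : ℕ) : cnt w false k ≤ cnt w true k := hw.2 k

lemma cntN_le_n (hw : IsDyckA n w) (k : ℕ) : cnt w true k ≤ n := by
  rcases le_total k (2 * n) with h | h
  · exact le_trans (cnt_mono w true h) (le_of_eq (dyck_total hw))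
  · rw [cnt_of_ge w true h, dyck_total hw]

lemma card_Xd : (Xd w).card = (pathDes w).card :=
  Finset.card_image_of_injOn (fun i hi j hj h => des_injOn_cntE i hi j hj h)

lemma card_Yd : (Yd w).card = (pathDes w).card :=
  Finset.card_image_of_injOn (fun i hi j hj h => des_injOn_cntN i hi j hj h)

lemma Xd_subset (hw : IsDyckA n w) : Xd w ⊆ Finset.Icc 1 (n - 1) := by
  intro x hx
  rcases Finset.mem_image.mp hx with ⟨i, hi, rfl⟩
  have h1 : 1 ≤ cnt w false i := by rw [cntE_des hi]; omega
  have h2 : cnt w false i ≤ cnt w true i := dyck_prefix hw i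
  have h3 : cnt w true i + cnt w false i = i := cnt_split_des hi
  have h4 : i < 2 * n := des_lt hi
  rw [Finset.mem_Icc]
  omega

lemma Yd_subset (hw : IsDyckA n w) : Yd w ⊆ Finset.Icc 1 (n - 1) := by
  intro y hy
  rcases Finset.mem_image.mp hy with ⟨i, hi, rfl⟩
  have h1 : 1 ≤ cnt w false i := by rw [cntE_des hi]; omega
  have h2 : cnt w false i ≤ cnt w true i := dyck_prefix hw i
  have h3 : cnt w true (i + 1) = cnt w true i + 1 := cntN_des hi
  have h4 : cnt w true (i + 1) ≤ n := cntN_le_n hw (i + 1)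
  rw [Finset.mem_Icc]
  omega

lemma card_filter_Xd (c : ℕ) :
    ((Xd w).filter (· ≤ c)).card = ((pathDes w).filter (fun i => cnt w false i ≤ c)).card := by
  classical
  rw [Xd, Finset.filter_image]
  apply Finset.card_image_of_injOn
  intro i hi j hj h
  exact des_injOn_cntE i (Finset.mem_of_mem_filter i hi) j (Finset.mem_of_mem_filter j hj) h

lemma card_filter_Yd (c : ℕ) :
    ((Yd w).filter (· ≤ c)).card = ((pathDes w).filter (fun i => cnt w true i ≤ c)).card := by
  classical
  rw [Yd, Finset.filter_image]
  apply Finset.card_image_of_injOn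
  intro i hi j hj h
  exact des_injOn_cntN i (Finset.mem_of_mem_filter i hi) j (Finset.mem_of_mem_filter j hj) h

lemma dominance (hw : IsDyckA n w) (c : ℕ) :
    ((Yd w).filter (· ≤ c)).card ≤ ((Xd w).filter (· ≤ c)).card := by
  rw [card_filter_Xd, card_filter_Yd]
  apply Finset.card_le_card
  intro i hi
  rcases Finset.mem_filter.mp hi with ⟨hi1, hi2⟩
  exact Finset.mem_filter.mpr ⟨hi1, le_trans (dyck_prefix hw i) hi2⟩

lemma maj_eq (hw : IsDyckA n w) :
    majA n w + (Xd w).sum id + (Yd w).sum id = 2 * n * (pathDes w).card := by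
  rw [Xd, Yd, Finset.sum_image (fun i hi j hj h => des_injOn_cntE i hi j hj h),
    Finset.sum_image (fun i hi j hj h => des_injOn_cntN i hi j hj h)]
  unfold majA
  rw [← Finset.sum_add_distrib, ← Finset.sum_add_distrib]
  have hpt : ∀ i ∈ pathDes w, 2 * n - i + id (cnt w false i) + id (cnt w true i) = 2 * n := by
    intro i hi
    have h1 : cnt w true i + cnt w false i = i := cnt_split_des hi
    have h2 : i < 2 * n := des_lt hi
    simp only [id]
    omega
  rw [Finset.sum_congr rfl hpt, Finset.sum_const, smul_eq_mul, mul_comm]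

/-- rank lemma: rank of the x-coordinate of a valley among X equals rank of valley -/
lemma rank_Xd (hi : i ∈ pathDes w) :
    ((Xd w).filter (· ≤ cnt w false i)).card = ((pathDes w).filter (· ≤ i)).card := by
  rw [card_filter_Xd]
  congr 1
  apply Finset.filter_congr
  intro j hj
  constructor
  · intro h
    by_contra hgt
    push_neg at hgt
    exact absurd (des_cntE_lt hj hgt) (by omega)
  · intro h
    rcases eq_or_lt_of_le h with rfl | hlt
    · exact le_refl _
    · exact le_of_lt (des_cntE_lt hi hlt)

lemma rank_Yd (hi : i ∈ pathDes w) :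
    ((Yd w).filter (· ≤ cnt w true i)).card = ((pathDes w).filter (· ≤ i)).card := by
  rw [card_filter_Yd]
  congr 1
  apply Finset.filter_congr
  intro j hj
  constructor
  · intro h
    by_contra hgt
    push_neg at hgt
    exact absurd (des_cntN_lt hi hgt) (by omega)
  · intro h
    rcases eq_or_lt_of_le h with rfl | hlt
    · exact le_refl _
    · exact le_of_lt (des_cntN_lt hj hlt)

end Dyck

section Det
variable {n : ℕ} {w w₁ w₂ : Fin (2 * n) → Bool}

lemma exists_next_des (hw : IsDyckA n w) {t : ℕ} (ht : t < 2 * n)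
    (hE : w ⟨t, ht⟩ = false) (hlt : cnt w true t < n) :
    ∃ i ∈ pathDes w, t < i ∧ cnt w true i = cnt w true t ∧ cnt w false t < cnt w false i := by
  classical
  set S := Finset.univ.filter (fun u : Fin (2 * n) => t < (u : ℕ) ∧ w u = true) with hSdef
  have hS : S.Nonempty := by
    by_contra hne
    rw [Finset.not_nonempty_iff_eq_empty] at hne
    have hall : ∀ u : Fin (2 * n), ¬(t < (u : ℕ) ∧ w u = true) := by
      intro u hu
      have : u ∈ S := by simp [hSdef, hu.1, hu.2]
      rw [hne] at this
      exact absurd this (Finset.notMem_empty u)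
    have heq : cnt w true (2 * n) = cnt w true t := by
      unfold cnt
      congr 1
      apply Finset.filter_congr
      intro u _
      constructor
      · rintro ⟨_, hu⟩
        refine ⟨?_, hu⟩
        rcases Nat.lt_trichotomy (u : ℕ) t with h | h | h
        · exact h
        · exfalso
          have : u = ⟨t, ht⟩ := Fin.ext h
          rw [this] at hu
          rw [hE] at hu
          exact Bool.noConfusion hu
        · exact absurd ⟨h, hu⟩ (hall u)
      · rintro ⟨hu1, hu⟩
        exact ⟨u.isLt, hu⟩
    rw [dyck_total hw] at heq
    omega
  set u := S.min' hS with hudef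
  have humem : u ∈ S := S.min'_mem hS
  have hu1 : t < (u : ℕ) := (Finset.mem_filter.mp humem).2.1
  have hu2 : w u = true := (Finset.mem_filter.mp humem).2.2
  set i := (u : ℕ) with hidef
  have hA : ∀ v : Fin (2 * n), t ≤ (v : ℕ) → (v : ℕ) < i → w v = false := by
    intro v h1 h2
    rcases eq_or_lt_of_le h1 with h | h
    · have : v = ⟨t, ht⟩ := Fin.ext h.symm
      rw [this]; exact hE
    · by_contra hvt
      rw [Bool.not_eq_false] at hvt
      have : v ∈ S := by simp [hSdef, h, hvt]
      have := S.min'_le v this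
      omega
  have hi : i ∈ pathDes w := by
    rw [mem_pathDes]
    refine ⟨by omega, u.isLt, ?_, ?_⟩
    · exact hA ⟨i - 1, by omega⟩ (by simp; omega) (by simp; omega)
    · have : (⟨i, u.isLt⟩ : Fin (2 * n)) = u := Fin.ext rfl
      rw [this]; exact hu2
  have hcnt : cnt w true i = cnt w true t := by
    unfold cnt
    congr 1
    apply Finset.filter_congr
    intro v _
    constructor
    · rintro ⟨hv1, hv2⟩
      refine ⟨?_, hv2⟩
      by_contra hge
      push_neg at hge
      have := hA v hge hv1
      rw [this] at hv2
      exact Bool.noConfusion hv2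
    · rintro ⟨hv1, hv2⟩
      exact ⟨by omega, hv2⟩
  refine ⟨i, hi, hu1, hcnt, ?_⟩
  have e1 : cnt w true i + cnt w false i = i := cnt_split_des hi
  have e2 : cnt w true t + cnt w false t = t := by
    rw [cnt_add_cnt, min_eq_left (le_of_lt ht)]
  omega

lemma det (hw : IsDyckA n w) {t : ℕ} (ht : t < 2 * n) :
    w ⟨t, ht⟩ = false ↔ (cnt w true t = n ∨ (cnt w true t ∈ Yd w ∧
      ((Xd w).filter (· ≤ cnt w false t)).card <
        ((Yd w).filter (· ≤ cnt w true t)).card)) := by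
  constructor
  · intro hE
    rcases eq_or_lt_of_le (cntN_le_n hw t) with h | h
    · exact Or.inl h
    rcases exists_next_des hw ht hE h with ⟨i, hi, hti, hcnt, hcE⟩
    right
    constructor
    · rw [← hcnt]
      exact Finset.mem_image_of_mem _ hi
    · rw [← hcnt, rank_Yd hi, card_filter_Xd]
      have hsub : (pathDes w).filter (fun j => cnt w false j ≤ cnt w false t) ⊆
          (pathDes w).filter (fun j => j < i) := by
        intro j hj
        rcases Finset.mem_filter.mp hj with ⟨hj1, hj2⟩
        refine Finset.mem_filter.mpr ⟨hj1, ?_⟩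
        exact (des_lt_iff_cntE hj1 hi).mpr (by omega)
      have hsub2 : (pathDes w).filter (fun j => j < i) ⊆ (pathDes w).filter (· ≤ i) := by
        intro j hj
        rcases Finset.mem_filter.mp hj with ⟨a, b⟩
        exact Finset.mem_filter.mpr ⟨a, le_of_lt b⟩
      have hss : (pathDes w).filter (fun j => j < i) ⊂ (pathDes w).filter (· ≤ i) :=
        (Finset.ssubset_iff_of_subset hsub2).mpr
          ⟨i, Finset.mem_filter.mpr ⟨hi, le_refl i⟩, by simp⟩
      calc ((pathDes w).filter (fun j => cnt w false j ≤ cnt w false t)).card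
        ≤ ((pathDes w).filter (fun j => j < i)).card := Finset.card_le_card hsub
        _ < ((pathDes w).filter (· ≤ i)).card := Finset.card_lt_card hss
  · intro hyp
    by_contra hT
    rw [Bool.not_eq_false] at hT
    have hstep : cnt w true (t + 1) = cnt w true t + 1 := by
      rw [cnt_succ w true ht, if_pos hT]
    rcases hyp with h | ⟨hY, hrank⟩
    · have := cntN_le_n hw (t + 1)
      omega
    · rcases Finset.mem_image.mp hY with ⟨i, hi, hcnt⟩
      have hit : i ≤ t := by
        by_contra hgt
        push_neg at hgt
        have : cnt w true (t + 1) ≤ cnt w true i := cnt_mono w true hgt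
        omega
      have hcE : cnt w false i ≤ cnt w false t := cnt_mono w false hit
      rw [← hcnt, rank_Yd hi, card_filter_Xd] at hrank
      have hsub : (pathDes w).filter (· ≤ i) ⊆
          (pathDes w).filter (fun j => cnt w false j ≤ cnt w false t) := by
        intro j hj
        rcases Finset.mem_filter.mp hj with ⟨hj1, hj2⟩
        refine Finset.mem_filter.mpr ⟨hj1, ?_⟩
        exact le_trans (cnt_mono w false hj2) hcE
      exact absurd (Finset.card_le_card hsub) (by omega)

lemma dyck_ext (hw1 : IsDyckA n w₁) (hw2 : IsDyckA n w₂)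
    (hX : Xd w₁ = Xd w₂) (hY : Yd w₁ = Yd w₂) : w₁ = w₂ := by
  have key : ∀ t : ℕ, ∀ ht : t < 2 * n, w₁ ⟨t, ht⟩ = w₂ ⟨t, ht⟩ := by
    intro t
    induction t using Nat.strong_induction_on with
    | _ t IH =>
      intro ht
      have hcongr : ∀ b, cnt w₁ b t = cnt w₂ b t := by
        intro b
        apply cnt_congr
        intro u hu
        have := IH (u : ℕ) hu u.isLt
        simpa using this
      have h1 := det hw1 ht
      have h2 := det hw2 ht
      rw [hX, hY, hcongr true, hcongr false] at h1
      rw [← h2] at h1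
      cases hv1 : w₁ ⟨t, ht⟩ <;> cases hv2 : w₂ ⟨t, ht⟩
      · rfl
      · exact absurd (h1.mp hv1) (by rw [hv2]; simp)
      · exact absurd (h1.mpr hv2) (by rw [hv1]; simp)
      · rfl
  funext u
  have := key (u : ℕ) u.isLt
  simpa using this

end Det

section Construct

/-- matched pairs of two finsets of the same cardinality -/
noncomputable def pairs (X Y : Finset ℕ) (h : Y.card = X.card) : Finset (ℕ × ℕ) :=
  Finset.univ.image (fun s : Fin X.card =>
    ((X.orderIsoOfFin rfl s : ℕ), (Y.orderIsoOfFin h s : ℕ)))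

lemma image_orderIsoOfFin (Z : Finset ℕ) {k : ℕ} (h : Z.card = k) :
    Finset.univ.image (fun s : Fin k => (Z.orderIsoOfFin h s : ℕ)) = Z := by
  apply Finset.Subset.antisymm
  · intro z hz
    rcases Finset.mem_image.mp hz with ⟨s, _, rfl⟩
    exact (Z.orderIsoOfFin h s).2
  · intro z hz
    exact Finset.mem_image.mpr ⟨(Z.orderIsoOfFin h).symm ⟨z, hz⟩, Finset.mem_univ _, by simp⟩

lemma card_filter_le_orderIso (Z : Finset ℕ) {k : ℕ} (h : Z.card = k) (c : ℕ) :
    (Z.filter (· ≤ c)).card =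
      (Finset.univ.filter (fun j : Fin k => ((Z.orderIsoOfFin h j : ℕ)) ≤ c)).card := by
  classical
  have himg : Z.filter (· ≤ c) =
      (Finset.univ.filter (fun j : Fin k => ((Z.orderIsoOfFin h j : ℕ)) ≤ c)).image
        (fun j => (Z.orderIsoOfFin h j : ℕ)) := by
    conv_lhs => rw [← image_orderIsoOfFin Z h]
    rw [Finset.filter_image]
  rw [himg]
  apply Finset.card_image_of_injOn
  intro a _ b _ hab
  have : Z.orderIsoOfFin h a = Z.orderIsoOfFin h b := Subtype.ext hab
  exact (Z.orderIsoOfFin h).injective this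

lemma orderIso_coe_lt (Z : Finset ℕ) {k : ℕ} (h : Z.card = k) (a b : Fin k) :
    (Z.orderIsoOfFin h a : ℕ) < (Z.orderIsoOfFin h b : ℕ) ↔ a < b := by
  constructor
  · intro hab
    by_contra hle
    push_neg at hle
    have := (Z.orderIsoOfFin h).monotone hle
    have : (Z.orderIsoOfFin h b : ℕ) ≤ (Z.orderIsoOfFin h a : ℕ) := this
    omega
  · intro hab
    have := (Z.orderIsoOfFin h).strictMono hab
    exact this

lemma rank_orderIsoOfFin (Z : Finset ℕ) {k : ℕ} (h : Z.card = k) (s : Fin k) :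
    (Z.filter (· ≤ (Z.orderIsoOfFin h s : ℕ))).card = (s : ℕ) + 1 := by
  rw [card_filter_le_orderIso Z h]
  have : (Finset.univ.filter (fun j : Fin k => ((Z.orderIsoOfFin h j : ℕ)) ≤
      (Z.orderIsoOfFin h s : ℕ))) = Finset.Iic s := by
    ext j
    simp only [Finset.mem_filter, Finset.mem_univ, true_and, Finset.mem_Iic]
    constructor
    · intro hj
      by_contra hgt
      push_neg at hgt
      have := (orderIso_coe_lt Z h s j).mpr hgt
      omega
    · intro hj
      rcases eq_or_lt_of_le hj with rfl | hlt
      · exact le_refl _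
      · exact le_of_lt ((orderIso_coe_lt Z h j s).mpr hlt)
  rw [this, Fin.card_Iic]

variable {n : ℕ} {X Y : Finset ℕ}

lemma mem_pairs {h : Y.card = X.card} {p : ℕ × ℕ} :
    p ∈ pairs X Y h ↔ ∃ s : Fin X.card,
      p = ((X.orderIsoOfFin rfl s : ℕ), (Y.orderIsoOfFin h s : ℕ)) := by
  unfold pairs
  simp only [Finset.mem_image, Finset.mem_univ, true_and]
  constructor
  · rintro ⟨s, hs⟩; exact ⟨s, hs.symm⟩
  · rintro ⟨s, hs⟩; exact ⟨s, hs.symm⟩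

lemma pairs_proj1 (h : Y.card = X.card) : (pairs X Y h).image Prod.fst = X := by
  unfold pairs
  rw [Finset.image_image]
  exact image_orderIsoOfFin X rfl

lemma pairs_proj2 (h : Y.card = X.card) : (pairs X Y h).image Prod.snd = Y := by
  unfold pairs
  rw [Finset.image_image]
  exact image_orderIsoOfFin Y h

lemma pairs_bounds (hX : X ⊆ Finset.Icc 1 (n - 1)) (hY : Y ⊆ Finset.Icc 1 (n - 1))
    {h : Y.card = X.card} {p : ℕ × ℕ} (hp : p ∈ pairs X Y h) :
    1 ≤ p.1 ∧ p.1 ≤ n - 1 ∧ 1 ≤ p.2 ∧ p.2 ≤ n - 1 := by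
  rcases mem_pairs.mp hp with ⟨s, rfl⟩
  have h1 := hX (X.orderIsoOfFin rfl s).2
  have h2 := hY (Y.orderIsoOfFin h s).2
  rw [Finset.mem_Icc] at h1 h2
  exact ⟨h1.1, h1.2, h2.1, h2.2⟩

lemma pairs_le (hdom : ∀ c, (Y.filter (· ≤ c)).card ≤ (X.filter (· ≤ c)).card)
    {h : Y.card = X.card} {p : ℕ × ℕ} (hp : p ∈ pairs X Y h) : p.1 ≤ p.2 := by
  rcases mem_pairs.mp hp with ⟨s, rfl⟩
  by_contra hgt
  push_neg at hgt
  simp only at hgt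
  set c := (Y.orderIsoOfFin h s : ℕ) with hc
  have h1 : (Y.filter (· ≤ c)).card = (s : ℕ) + 1 := rank_orderIsoOfFin Y h s
  have h2 : (X.filter (· ≤ c)).card ≤ (s : ℕ) := by
    rw [card_filter_le_orderIso X rfl c]
    have hsub : (Finset.univ.filter (fun j : Fin X.card => ((X.orderIsoOfFin rfl j : ℕ)) ≤ c))
        ⊆ Finset.univ.filter (fun j : Fin X.card => j < s) := by
      intro j hj
      rcases Finset.mem_filter.mp hj with ⟨_, hj2⟩
      refine Finset.mem_filter.mpr ⟨Finset.mem_univ _, ?_⟩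
      have : (X.orderIsoOfFin rfl j : ℕ) < (X.orderIsoOfFin rfl s : ℕ) := by omega
      exact (orderIso_coe_lt X rfl j s).mp this
    calc (Finset.univ.filter (fun j : Fin X.card => ((X.orderIsoOfFin rfl j : ℕ)) ≤ c)).card
        ≤ (Finset.univ.filter (fun j : Fin X.card => j < s)).card := Finset.card_le_card hsub
      _ ≤ (s : ℕ) := by
          rw [show (Finset.univ.filter (fun j : Fin X.card => j < s)) = Finset.Iio s by
            ext t; simp]
          simp [Fin.card_Iio]
  have := hdom c
  omega

lemma pairs_compat {h : Y.card = X.card} {p q : ℕ × ℕ}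
    (hp : p ∈ pairs X Y h) (hq : q ∈ pairs X Y h) : p.1 < q.1 ↔ p.2 < q.2 := by
  rcases mem_pairs.mp hp with ⟨s, rfl⟩
  rcases mem_pairs.mp hq with ⟨s', rfl⟩
  simp only
  rw [orderIso_coe_lt, orderIso_coe_lt]

end Construct

section FMin

variable (n : ℕ) (V : Finset (ℕ × ℕ))

/-- the augmented valley set -/
def aug : Finset (ℕ × ℕ) := insert ((0:ℕ),(0:ℕ)) (insert (n,n) V)

lemma aug_nonempty : (aug n V).Nonempty := ⟨_, Finset.mem_insert_self _ _⟩

/-- the height function of the path with valley set `V` -/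
def fmin (k : ℕ) : ℕ := (aug n V).inf' (aug_nonempty n V) (fun p => max p.2 (k - p.1))

/-- the path with valley set `V` -/
def pathOf : Fin (2 * n) → Bool := fun t => decide (fmin n V ((t:ℕ)+1) = fmin n V (t:ℕ) + 1)

variable {n V}

lemma mem_aug {p : ℕ × ℕ} : p ∈ aug n V ↔ p = (0,0) ∨ p = (n,n) ∨ p ∈ V := by
  simp [aug]

lemma zero_mem_aug : ((0:ℕ),(0:ℕ)) ∈ aug n V := Finset.mem_insert_self _ _
lemma nn_mem_aug : ((n:ℕ),(n:ℕ)) ∈ aug n V :=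
  Finset.mem_insert_of_mem (Finset.mem_insert_self _ _)
lemma mem_aug_of_mem {p : ℕ × ℕ} (hp : p ∈ V) : p ∈ aug n V :=
  Finset.mem_insert_of_mem (Finset.mem_insert_of_mem hp)

lemma fmin_le {k : ℕ} {p : ℕ × ℕ} (hp : p ∈ aug n V) :
    fmin n V k ≤ max p.2 (k - p.1) := Finset.inf'_le _ hp

lemma fmin_exists (k : ℕ) : ∃ p ∈ aug n V, fmin n V k = max p.2 (k - p.1) :=
  Finset.exists_mem_eq_inf' _ _

lemma fmin_ge {k c : ℕ} (h : ∀ p ∈ aug n V, c ≤ max p.2 (k - p.1)) :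
    c ≤ fmin n V k := Finset.le_inf' _ _ h

variable (hn : 1 ≤ n)
variable (hb : ∀ p ∈ V, 1 ≤ p.1 ∧ p.1 ≤ p.2 ∧ p.2 ≤ n - 1)
variable (hcV : ∀ p ∈ V, ∀ q ∈ V, (p.1 < q.1 ↔ p.2 < q.2))

include hb in
lemma aug_le : ∀ p ∈ aug n V, p.1 ≤ p.2 ∧ p.2 ≤ n := by
  intro p hp
  rcases mem_aug.mp hp with rfl | rfl | hpV
  · simp
  · simp
  · have := hb p hpV
    omega

include hn hb hcV in
lemma aug_compat : ∀ p ∈ aug n V, ∀ q ∈ aug n V, (p.1 < q.1 ↔ p.2 < q.2) := by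
  intro p hp q hq
  rcases mem_aug.mp hp with rfl | rfl | hpV <;> rcases mem_aug.mp hq with rfl | rfl | hqV
  · exact Iff.rfl
  · exact Iff.rfl
  · have := hb q hqV
    show 0 < q.1 ↔ 0 < q.2
    omega
  · exact Iff.rfl
  · exact Iff.rfl
  · have := hb q hqV
    show n < q.1 ↔ n < q.2
    omega
  · have := hb p hpV
    show p.1 < 0 ↔ p.2 < 0
    omega
  · have := hb p hpV
    show p.1 < n ↔ p.2 < n
    omega
  · exact hcV p hpV q hqV

lemma fmin_zero : fmin n V 0 = 0 := by
  have h := fmin_le (k := 0) (zero_mem_aug (n := n) (V := V))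
  simpa using h

lemma fmin_mono {k l : ℕ} (hkl : k ≤ l) : fmin n V k ≤ fmin n V l := by
  obtain ⟨p, hp, hfp⟩ := fmin_exists (n := n) (V := V) l
  rw [hfp]
  refine le_trans (fmin_le hp) ?_
  apply max_le (le_max_left _ _)
  exact le_trans (by omega) (le_max_right p.2 (l - p.1))

lemma fmin_succ_le {k : ℕ} : fmin n V (k + 1) ≤ fmin n V k + 1 := by
  obtain ⟨p, hp, hfp⟩ := fmin_exists (n := n) (V := V) k
  rw [hfp]
  refine le_trans (fmin_le hp) ?_
  have h1 : p.2 ≤ max p.2 (k - p.1) := le_max_left _ _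
  have h2 : k - p.1 ≤ max p.2 (k - p.1) := le_max_right _ _
  apply max_le <;> omega

lemma fmin_step (k : ℕ) : fmin n V (k + 1) = fmin n V k ∨
    fmin n V (k + 1) = fmin n V k + 1 := by
  have h1 : fmin n V k ≤ fmin n V (k + 1) := fmin_mono (Nat.le_succ k)
  have h2 : fmin n V (k + 1) ≤ fmin n V k + 1 := fmin_succ_le
  omega

include hb in
lemma fmin_total : fmin n V (2 * n) = n := by
  apply le_antisymm
  · have h := fmin_le (k := 2 * n) (nn_mem_aug (n := n) (V := V))
    refine le_trans h (le_of_eq ?_)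
    have h2 : 2 * n - n = n := by omega
    rw [show ((n,n) : ℕ × ℕ).2 = n from rfl, show ((n,n) : ℕ × ℕ).1 = n from rfl,
      h2, max_self]
  · apply fmin_ge
    intro p hp
    have := aug_le hb p hp
    have h1 : n ≤ 2 * n - p.1 := by omega
    exact le_trans h1 (le_max_right _ _)

include hb in
lemma fmin_half (k : ℕ) : k ≤ 2 * fmin n V k := by
  obtain ⟨p, hp, hfp⟩ := fmin_exists (n := n) (V := V) k
  have hple := aug_le hb p hp
  rw [hfp]
  have h1 : p.2 ≤ max p.2 (k - p.1) := le_max_left _ _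
  have h2 : k - p.1 ≤ max p.2 (k - p.1) := le_max_right _ _
  omega

lemma pathOf_cntN : ∀ k, k ≤ 2 * n → cnt (pathOf n V) true k = fmin n V k := by
  intro k
  induction k with
  | zero => intro _; rw [cnt_zero, fmin_zero]
  | succ k IH =>
    intro hk
    have hklt : k < 2 * n := by omega
    rw [cnt_succ _ _ hklt, IH (by omega)]
    rcases fmin_step (n := n) (V := V) k with h | h
    · rw [if_neg, h, add_zero]
      simp only [pathOf, decide_eq_true_eq]
      omega
    · rw [if_pos, h]
      simp only [pathOf, decide_eq_true_eq]
      exact h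

lemma pathOf_cntE : ∀ k, k ≤ 2 * n → cnt (pathOf n V) false k = k - fmin n V k := by
  intro k hk
  have h1 := cnt_add_cnt (pathOf n V) k
  rw [min_eq_left hk, pathOf_cntN k hk] at h1
  omega

include hb in
lemma pathOf_dyck : IsDyckA n (pathOf n V) := by
  constructor
  · rw [countN_eq_cnt, pathOf_cntN (2 * n) (le_refl _), fmin_total hb]
  · intro k
    rw [countE_eq_cnt, countN_eq_cnt]
    rcases le_total k (2 * n) with h | h
    · rw [pathOf_cntN k h, pathOf_cntE k h]
      have := fmin_half hb (n := n) (V := V) k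
      omega
    · rw [cnt_of_ge _ _ h, cnt_of_ge _ _ h,
        pathOf_cntN (2 * n) (le_refl _), pathOf_cntE (2 * n) (le_refl _),
        fmin_total hb]
      omega

end FMin

section FminValley

variable {n : ℕ} {V : Finset (ℕ × ℕ)}
variable (hn : 1 ≤ n)
variable (hb : ∀ p ∈ V, 1 ≤ p.1 ∧ p.1 ≤ p.2 ∧ p.2 ≤ n - 1)
variable (hcV : ∀ p ∈ V, ∀ q ∈ V, (p.1 < q.1 ↔ p.2 < q.2))

include hn hb hcV in
lemma fmin_at_valley {p : ℕ × ℕ} (hp : p ∈ V) : fmin n V (p.1 + p.2) = p.2 := by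
  have Pc := aug_compat hn hb hcV
  have hpb := hb p hp
  apply le_antisymm
  · have h := fmin_le (k := p.1 + p.2) (mem_aug_of_mem (n := n) hp)
    refine le_trans h (le_of_eq ?_)
    have h2 : p.1 + p.2 - p.1 = p.2 := by omega
    rw [h2, max_self]
  · apply fmin_ge
    intro q hq
    have h1 : q.2 ≤ max q.2 (p.1 + p.2 - q.1) := le_max_left _ _
    have h2 : p.1 + p.2 - q.1 ≤ max q.2 (p.1 + p.2 - q.1) := le_max_right _ _
    by_cases hle : p.2 ≤ q.2
    · omega
    · have : q.1 < p.1 := (Pc q hq p (mem_aug_of_mem hp)).mpr (by omega)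
      omega

include hn hb hcV in
lemma fmin_before_valley {p : ℕ × ℕ} (hp : p ∈ V) : fmin n V (p.1 + p.2 - 1) = p.2 := by
  have Pc := aug_compat hn hb hcV
  have hpb := hb p hp
  apply le_antisymm
  · have h := fmin_le (k := p.1 + p.2 - 1) (mem_aug_of_mem (n := n) hp)
    refine le_trans h (le_of_eq ?_)
    have h2 : p.1 + p.2 - 1 - p.1 = p.2 - 1 := by omega
    rw [h2, max_eq_left (by omega)]
  · apply fmin_ge
    intro q hq
    have h1 : q.2 ≤ max q.2 (p.1 + p.2 - 1 - q.1) := le_max_left _ _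
    have h2 : p.1 + p.2 - 1 - q.1 ≤ max q.2 (p.1 + p.2 - 1 - q.1) := le_max_right _ _
    by_cases hle : p.2 ≤ q.2
    · omega
    · have : q.1 < p.1 := (Pc q hq p (mem_aug_of_mem hp)).mpr (by omega)
      omega

include hn hb hcV in
lemma fmin_after_valley {p : ℕ × ℕ} (hp : p ∈ V) : fmin n V (p.1 + p.2 + 1) = p.2 + 1 := by
  have Pc := aug_compat hn hb hcV
  have hpb := hb p hp
  apply le_antisymm
  · have h := fmin_le (k := p.1 + p.2 + 1) (mem_aug_of_mem (n := n) hp)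
    refine le_trans h (le_of_eq ?_)
    have h2 : p.1 + p.2 + 1 - p.1 = p.2 + 1 := by omega
    rw [h2, max_eq_right (by omega)]
  · apply fmin_ge
    intro q hq
    have h1 : q.2 ≤ max q.2 (p.1 + p.2 + 1 - q.1) := le_max_left _ _
    have h2 : p.1 + p.2 + 1 - q.1 ≤ max q.2 (p.1 + p.2 + 1 - q.1) := le_max_right _ _
    by_cases hle : p.2 + 1 ≤ q.2
    · omega
    · have : ¬ (p.1 < q.1) := by
        intro hcon
        have := (Pc p (mem_aug_of_mem hp) q hq).mp hcon
        omega
      omega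

include hn hb hcV in
lemma pathOf_des : pathDes (pathOf n V) = V.image (fun p => p.1 + p.2) := by
  have Pc := aug_compat hn hb hcV
  apply Finset.Subset.antisymm
  · intro i hi
    rcases mem_pathDes.mp hi with ⟨h0, hilt, hEw, hNw⟩
    have hE : fmin n V i = fmin n V (i - 1) := by
      have heq : pathOf n V ⟨i - 1, Nat.lt_of_le_of_lt (Nat.sub_le i 1) hilt⟩ =
          decide (fmin n V ((i-1)+1) = fmin n V (i-1) + 1) := rfl
      rw [heq] at hEw
      have hne := of_decide_eq_false hEw
      have hstep := fmin_step (n := n) (V := V) (i - 1)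
      have hsucc : (i - 1) + 1 = i := by omega
      rw [hsucc] at hne hstep
      omega
    have hN : fmin n V (i + 1) = fmin n V i + 1 := by
      have heq : pathOf n V ⟨i, hilt⟩ =
          decide (fmin n V (i+1) = fmin n V i + 1) := rfl
      rw [heq] at hNw
      exact of_decide_eq_true hNw
    obtain ⟨q, hq, hfq⟩ := fmin_exists (n := n) (V := V) i
    rcases mem_aug.mp hq with rfl | rfl | hqV
    · exfalso
      have hc_eq : fmin n V i = i := by
        rw [hfq]
        show max 0 (i - 0) = i
        omega
      have hle := fmin_le (k := i - 1) (zero_mem_aug (n := n) (V := V))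
      have : max ((0,0) : ℕ × ℕ).2 ((i-1) - ((0,0) : ℕ × ℕ).1) = i - 1 := by
        show max 0 (i - 1 - 0) = i - 1
        omega
      rw [this] at hle
      omega
    · exfalso
      have h1 : n ≤ fmin n V i := by
        rw [hfq]
        exact le_trans (le_max_left n (i - n)) (le_of_eq rfl)
      have h2 : fmin n V (i + 1) ≤ n :=
        le_trans (fmin_mono (by omega : i + 1 ≤ 2 * n)) (le_of_eq (fmin_total hb))
      omega
    · have hqb := hb q hqV
      set c := fmin n V i with hc
      have hmax : max q.2 (i - q.1) = c := hfq.symm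
      have hstep1 : c ≤ i - q.1 := by
        by_contra hlt
        push_neg at hlt
        have hq2 : q.2 = c := by
          rcases max_choice q.2 (i - q.1) with h | h <;> omega
        have hbnd := fmin_le (k := i + 1) hq
        have : max q.2 (i + 1 - q.1) ≤ c := by
          apply max_le (by omega)
          omega
        omega
      have hiq : i - q.1 = c ∧ q.2 ≤ c := by
        have h2 : i - q.1 ≤ max q.2 (i - q.1) := le_max_right _ _
        have h1 : q.2 ≤ max q.2 (i - q.1) := le_max_left _ _
        omega
      have hcge1 : 1 ≤ c := by omega
      have higen : i = q.1 + c := by omega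
      have hq2c : q.2 = c := by
        by_contra hne
        have hq2lt : q.2 < c := by omega
        have hbnd := fmin_le (k := i - 1) hq
        have hsub : i - 1 - q.1 = c - 1 := by omega
        rw [hsub] at hbnd
        have : max q.2 (c - 1) ≤ c - 1 := max_le (by omega) (le_refl _)
        omega
      refine Finset.mem_image.mpr ⟨q, hqV, ?_⟩
      omega
  · intro i hi
    rcases Finset.mem_image.mp hi with ⟨p, hpV, rfl⟩
    have hpb := hb p hpV
    have hfa := fmin_at_valley hn hb hcV hpV
    have hfb := fmin_before_valley hn hb hcV hpV
    have hfc := fmin_after_valley hn hb hcV hpV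
    rw [mem_pathDes]
    refine ⟨by omega, by omega, ?_, ?_⟩
    · show decide (fmin n V ((p.1 + p.2 - 1) + 1) = fmin n V (p.1 + p.2 - 1) + 1) = false
      have hsucc : (p.1 + p.2 - 1) + 1 = p.1 + p.2 := by omega
      rw [hsucc, hfa, hfb]
      simp
    · show decide (fmin n V ((p.1 + p.2) + 1) = fmin n V (p.1 + p.2) + 1) = true
      rw [hfc, hfa]
      simp

include hn hb hcV in
lemma pathOf_Xd : Xd (pathOf n V) = V.image Prod.fst := by
  rw [Xd, pathOf_des hn hb hcV, Finset.image_image]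
  apply Finset.image_congr
  intro p hp
  have hpb := hb p hp
  have hk : p.1 + p.2 ≤ 2 * n := by omega
  show cnt (pathOf n V) false (p.1 + p.2) = p.1
  rw [pathOf_cntE _ hk, fmin_at_valley hn hb hcV hp]
  omega

include hn hb hcV in
lemma pathOf_Yd : Yd (pathOf n V) = V.image Prod.snd := by
  rw [Yd, pathOf_des hn hb hcV, Finset.image_image]
  apply Finset.image_congr
  intro p hp
  have hpb := hb p hp
  have hk : p.1 + p.2 ≤ 2 * n := by omega
  show cnt (pathOf n V) true (p.1 + p.2) = p.2
  rw [pathOf_cntN _ hk, fmin_at_valley hn hb hcV hp]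

end FminValley

section DataSide

/-- valley data sets -/
def dataSet (n : ℕ) : Set (Finset ℕ × Finset ℕ) :=
  {p | p.1 ⊆ Finset.Icc 1 (n-1) ∧ p.2 ⊆ Finset.Icc 1 (n-1) ∧ p.2.card = p.1.card ∧
       ∀ c, (p.2.filter (· ≤ c)).card ≤ (p.1.filter (· ≤ c)).card}

/-- the statistic corresponding to the major index -/
def mstat (n : ℕ) (p : Finset ℕ × Finset ℕ) : ℕ :=
  2 * n * p.1.card - (p.1.sum id + p.2.sum id)

/-- the Lalanne–Kreweras involution on valley data -/
def lk (n : ℕ) (p : Finset ℕ × Finset ℕ) : Finset ℕ × Finset ℕ :=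
  (Finset.Icc 1 (n-1) \ p.2, Finset.Icc 1 (n-1) \ p.1)

theorem exists_dyck {n : ℕ} {X Y : Finset ℕ} (hn : 1 ≤ n)
    (hX : X ⊆ Finset.Icc 1 (n-1)) (hY : Y ⊆ Finset.Icc 1 (n-1))
    (h : Y.card = X.card)
    (hdom : ∀ c, (Y.filter (· ≤ c)).card ≤ (X.filter (· ≤ c)).card) :
    ∃ w : Fin (2*n) → Bool, IsDyckA n w ∧ Xd w = X ∧ Yd w = Y := by
  set V := pairs X Y h with hV
  have hb : ∀ p ∈ V, 1 ≤ p.1 ∧ p.1 ≤ p.2 ∧ p.2 ≤ n - 1 := by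
    intro p hp
    have h1 := pairs_bounds hX hY hp
    have h2 := pairs_le hdom hp
    exact ⟨h1.1, h2, h1.2.2.2⟩
  have hcV : ∀ p ∈ V, ∀ q ∈ V, (p.1 < q.1 ↔ p.2 < q.2) := fun p hp q hq =>
    pairs_compat hp hq
  refine ⟨pathOf n V, pathOf_dyck hb, ?_, ?_⟩
  · rw [pathOf_Xd hn hb hcV, hV, pairs_proj1]
  · rw [pathOf_Yd hn hb hcV, hV, pairs_proj2]

lemma sum_Icc_gauss (n : ℕ) (hn : 1 ≤ n) :
    2 * (Finset.Icc 1 (n-1)).sum id = n * (n - 1) := by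
  have h1 : Finset.range n = insert 0 (Finset.Icc 1 (n-1)) := by
    ext i; simp only [Finset.mem_range, Finset.mem_insert, Finset.mem_Icc]; omega
  have h2 := Finset.sum_range_id_mul_two n
  rw [h1, Finset.sum_insert (by simp)] at h2
  simp only [zero_add] at h2
  rw [mul_comm]
  simpa [id] using h2

lemma sum_le_of_subset_Icc {n : ℕ} {Z : Finset ℕ} (hZ : Z ⊆ Finset.Icc 1 (n-1)) :
    Z.sum id ≤ (n-1) * Z.card := by
  have := Finset.sum_le_card_nsmul Z id (n-1) (fun x hx => by
    have := hZ hx; rw [Finset.mem_Icc] at this; simpa using this.2)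
  simpa [mul_comm] using this

lemma mstat_add {n : ℕ} {p : Finset ℕ × Finset ℕ} (hp : p ∈ dataSet n) :
    mstat n p + (p.1.sum id + p.2.sum id) = 2 * n * p.1.card := by
  obtain ⟨hX, hY, hc, _⟩ := hp
  have hA := sum_le_of_subset_Icc hX
  have hB := sum_le_of_subset_Icc hY
  rw [hc] at hB
  have hmul : (n-1) * p.1.card ≤ n * p.1.card := Nat.mul_le_mul_right _ (by omega)
  have hAB : p.1.sum id + p.2.sum id ≤ 2 * n * p.1.card := by
    have : 2 * n * p.1.card = n * p.1.card + n * p.1.card := by ring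
    omega
  unfold mstat
  omega

lemma lk_mem {n : ℕ} {p : Finset ℕ × Finset ℕ} (hp : p ∈ dataSet n) :
    lk n p ∈ dataSet n := by
  obtain ⟨hX, hY, hc, hdom⟩ := hp
  refine ⟨Finset.sdiff_subset, Finset.sdiff_subset, ?_, ?_⟩
  · show (Finset.Icc 1 (n-1) \ p.1).card = (Finset.Icc 1 (n-1) \ p.2).card
    have h1 := Finset.card_sdiff_add_card_eq_card hX
    have h2 := Finset.card_sdiff_add_card_eq_card hY
    omega
  · intro c
    show ((Finset.Icc 1 (n-1) \ p.1).filter (· ≤ c)).card ≤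
      ((Finset.Icc 1 (n-1) \ p.2).filter (· ≤ c)).card
    have key : ∀ Z : Finset ℕ, Z ⊆ Finset.Icc 1 (n-1) →
        ((Finset.Icc 1 (n-1) \ Z).filter (· ≤ c)).card + (Z.filter (· ≤ c)).card =
          ((Finset.Icc 1 (n-1)).filter (· ≤ c)).card := by
      intro Z hZ
      classical
      have hsd : (Finset.Icc 1 (n-1) \ Z).filter (· ≤ c) =
          (Finset.Icc 1 (n-1)).filter (· ≤ c) \ Z.filter (· ≤ c) := by
        ext x
        simp only [Finset.mem_filter, Finset.mem_sdiff]
        tauto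
      rw [hsd]
      exact Finset.card_sdiff_add_card_eq_card
        (Finset.filter_subset_filter _ hZ)
    have k1 := key p.1 hX
    have k2 := key p.2 hY
    have := hdom c
    omega

lemma lk_lk {n : ℕ} {p : Finset ℕ × Finset ℕ} (hp : p ∈ dataSet n) :
    lk n (lk n p) = p := by
  obtain ⟨hX, hY, _, _⟩ := hp
  unfold lk
  simp only
  rw [Finset.sdiff_sdiff_eq_self hX, Finset.sdiff_sdiff_eq_self hY]

lemma mstat_lk {n : ℕ} (hn : 1 ≤ n) {p : Finset ℕ × Finset ℕ} (hp : p ∈ dataSet n) :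
    mstat n (lk n p) + mstat n p = n * (n - 1) := by
  obtain ⟨hX, hY, hc, hdom⟩ := hp
  have m1 := mstat_add (lk_mem ⟨hX, hY, hc, hdom⟩)
  have m2 := mstat_add ⟨hX, hY, hc, hdom⟩
  have e1 : (Finset.Icc 1 (n-1) \ p.2).sum id + p.2.sum id = (Finset.Icc 1 (n-1)).sum id :=
    Finset.sum_sdiff hY
  have e2 : (Finset.Icc 1 (n-1) \ p.1).sum id + p.1.sum id = (Finset.Icc 1 (n-1)).sum id :=
    Finset.sum_sdiff hX
  have c1 : (Finset.Icc 1 (n-1) \ p.2).card + p.2.card = n - 1 := by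
    have := Finset.card_sdiff_add_card_eq_card hY
    rwa [Nat.card_Icc, show n - 1 + 1 - 1 = n - 1 from rfl] at this
  have hgauss := sum_Icc_gauss n hn
  have hprod : 2 * n * (Finset.Icc 1 (n-1) \ p.2).card + 2 * n * p.1.card
      = 2 * (n * (n-1)) := by
    have hsum : (Finset.Icc 1 (n-1) \ p.2).card + p.1.card = n - 1 := by omega
    calc 2 * n * (Finset.Icc 1 (n-1) \ p.2).card + 2 * n * p.1.card
        = 2 * n * ((Finset.Icc 1 (n-1) \ p.2).card + p.1.card) := by ring
      _ = 2 * n * (n - 1) := by rw [hsum]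
      _ = 2 * (n * (n-1)) := by ring
  have hlk1 : (lk n p).1 = Finset.Icc 1 (n-1) \ p.2 := rfl
  have hlk2 : (lk n p).2 = Finset.Icc 1 (n-1) \ p.1 := rfl
  rw [hlk1, hlk2] at m1
  linarith [m1, m2, e1, e2, hprod, hgauss]

end DataSide

section Final

lemma phi_mem {n : ℕ} {w : Fin (2*n) → Bool} (hw : IsDyckA n w) :
    (Xd w, Yd w) ∈ dataSet n :=
  ⟨Xd_subset hw, Yd_subset hw, by rw [card_Xd, card_Yd], dominance hw⟩

lemma phi_mstat {n : ℕ} {w : Fin (2*n) → Bool} (hw : IsDyckA n w) :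
    mstat n (Xd w, Yd w) = majA n w := by
  have h1 := mstat_add (phi_mem hw)
  have h2 := maj_eq hw
  simp only [card_Xd] at h1
  linarith [h1, h2]

end Final

/-- The coefficients of `∑_{w ∈ D_n} q^{maj(w)}` are symmetric: for every
`n ≥ 1` and `0 ≤ k ≤ n(n-1)`, the number of Dyck paths of length `n` with major
index `k` equals the number of those with major index `n(n-1) - k`. -/
theorem majA_symmetric (n : ℕ) (hn : 1 ≤ n) (k : ℕ) (hk : k ≤ n * (n - 1)) :
    {w : Fin (2 * n) → Bool | IsDyckA n w ∧ majA n w = k}.ncard =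
      {w : Fin (2 * n) → Bool | IsDyckA n w ∧ majA n w = n * (n - 1) - k}.ncard := by
  classical
  have step1 : ∀ j : ℕ, {w : Fin (2*n) → Bool | IsDyckA n w ∧ majA n w = j}.ncard
      = {p : Finset ℕ × Finset ℕ | p ∈ dataSet n ∧ mstat n p = j}.ncard := by
    intro j
    have hbij : Set.BijOn (fun w => (Xd w, Yd w)) {w : Fin (2*n) → Bool | IsDyckA n w ∧ majA n w = j}
        {p : Finset ℕ × Finset ℕ | p ∈ dataSet n ∧ mstat n p = j} := by
      refine ⟨?_, ?_, ?_⟩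
      · rintro w ⟨hw, hmaj⟩
        exact ⟨phi_mem hw, by rw [phi_mstat hw, hmaj]⟩
      · rintro w₁ ⟨hw₁, _⟩ w₂ ⟨hw₂, _⟩ heq
        exact dyck_ext hw₁ hw₂ (congrArg Prod.fst heq) (congrArg Prod.snd heq)
      · rintro p ⟨hp, hm⟩
        obtain ⟨hX, hY, hc, hdom⟩ := hp
        obtain ⟨w, hw, hXw, hYw⟩ := exists_dyck hn hX hY hc hdom
        have hphi : (Xd w, Yd w) = p := by
          rw [hXw, hYw]
        refine ⟨w, ⟨hw, ?_⟩, hphi⟩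
        have h1 := phi_mstat hw
        rw [hphi] at h1
        exact h1.symm.trans hm
    rw [← hbij.image_eq, Set.ncard_image_of_injOn hbij.injOn]
  have step2 : {p : Finset ℕ × Finset ℕ | p ∈ dataSet n ∧ mstat n p = k}.ncard
      = {p : Finset ℕ × Finset ℕ | p ∈ dataSet n ∧ mstat n p = n * (n - 1) - k}.ncard := by
    have hbij : Set.BijOn (lk n) {p : Finset ℕ × Finset ℕ | p ∈ dataSet n ∧ mstat n p = k}
        {p : Finset ℕ × Finset ℕ | p ∈ dataSet n ∧ mstat n p = n * (n - 1) - k} := by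
      refine ⟨?_, ?_, ?_⟩
      · rintro p ⟨hp, hm⟩
        refine ⟨lk_mem hp, ?_⟩
        have := mstat_lk hn hp
        omega
      · rintro p ⟨hp, _⟩ q ⟨hq, _⟩ heq
        have := congrArg (lk n) heq
        rwa [lk_lk hp, lk_lk hq] at this
      · rintro q ⟨hq, hm⟩
        refine ⟨lk n q, ⟨lk_mem hq, ?_⟩, lk_lk hq⟩
        have := mstat_lk hn hq
        omega
    rw [← hbij.image_eq, Set.ncard_image_of_injOn hbij.injOn]
  rw [step1 k, step2, ← step1 (n * (n - 1) - k)]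


end Stmt
end

section
/- For every n ≥ 1 and every integer k with 0 ≤ k ≤ 2n², the number of Dyck paths of type B_n with type B major index k equals the number of Dyck paths of type B_n with type B major index 2n² − k; that is, the generating polynomial Σ_w q^{maj(w)} over type B_n Dyck paths has a symmetric sequence of coefficients centered at n². -/
open scoped Classical

namespace Stmt

/-! Write `majB w = 2 s(w)` with `s(w) = neg(w) + ∑_{i ∈ Des(w)} (2n - i)`. The sum
`∑_w q^{s(w)}` over type `B_n` Dyck paths is the Gaussian binomial `[2n choose n]_q`, which is
palindromic of degree `n²`; hence `∑_w q^{maj(w)} = [2n choose n]_{q²}` is palindromic of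
degree `2n²`.

To compute the generating function, relax the prefix condition to `#E ≤ #N + h` and remove the
first step: an initial `N` raises the allowance `h` by one and leaves `s` unchanged; an initial `E`
lowers it, adds `1` to `s`, and adds the length of the rest of the word when an `N` follows (a
descent at position `1`). The resulting recursion in `(h, l)` is also satisfied by an explicit sum
of Gaussian binomials, which is `[l choose ⌈l/2⌉]_q` at `h = 0`. -/

open Polynomial

noncomputable def qBinomial : ℕ → ℕ → ℤ[X]
  | _, 0 => 1
  | 0, _ + 1 => 0
  | m + 1, k + 1 => qBinomial m k + X ^ (k + 1) * qBinomial m (k + 1)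

@[simp] lemma qBinomial_zero_right (m : ℕ) : qBinomial m 0 = 1 := by cases m <;> rfl

lemma qBinomial_succ_succ (m k : ℕ) :
    qBinomial (m + 1) (k + 1) = qBinomial m k + X ^ (k + 1) * qBinomial m (k + 1) := rfl

lemma qBinomial_eq_zero_of_lt : ∀ {m k : ℕ}, m < k → qBinomial m k = 0
  | 0, _ + 1, _ => rfl
  | m + 1, k + 1, h => by
    rw [qBinomial_succ_succ, qBinomial_eq_zero_of_lt (by omega : m < k),
      qBinomial_eq_zero_of_lt (by omega : m < k + 1), mul_zero, add_zero]

@[simp] lemma qBinomial_self : ∀ m : ℕ, qBinomial m m = 1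
  | 0 => rfl
  | m + 1 => by
    rw [qBinomial_succ_succ, qBinomial_self m, qBinomial_eq_zero_of_lt m.lt_succ_self,
      mul_zero, add_zero]

lemma qBinomial_succ_succ' {m c d : ℕ} (h : c + d = m) :
    qBinomial (m + 1) (c + 1) = qBinomial m (c + 1) + X ^ d * qBinomial m c := by
  induction m generalizing c d with
  | zero =>
    obtain ⟨rfl, rfl⟩ : c = 0 ∧ d = 0 := by omega
    simp [qBinomial_eq_zero_of_lt]
  | succ m ih =>
    rcases c with _ | c
    · obtain rfl : d = m + 1 := by omega
      have ih₀ := ih (c := 0) (d := m) (by omega)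
      have p₀ := qBinomial_succ_succ m 0
      rw [qBinomial_succ_succ (m + 1) 0]
      simp only [qBinomial_zero_right] at ih₀ p₀ ⊢
      linear_combination X * ih₀ - p₀
    rcases d with _ | d
    · obtain rfl : c = m := by omega
      simp [qBinomial_eq_zero_of_lt]
    have ih₁ := ih (c := c) (d := d + 1) (by omega)
    have ih₂ := ih (c := c + 1) (d := d) (by omega)
    rw [qBinomial_succ_succ (m + 1) (c + 1)]
    linear_combination ih₁ + X ^ (c + 2) * ih₂ - qBinomial_succ_succ m (c + 1) -
      X ^ (d + 1) * qBinomial_succ_succ m c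

lemma qBinomial_symm {m k d : ℕ} (h : k + d = m) : qBinomial m k = qBinomial m d := by
  induction m generalizing k d with
  | zero =>
    obtain ⟨rfl, rfl⟩ : k = 0 ∧ d = 0 := by omega
    rfl
  | succ m ih =>
    rcases k with _ | k
    · obtain rfl : d = m + 1 := by omega
      simp
    rcases d with _ | d
    · obtain rfl : k = m := by omega
      simp
    rw [qBinomial_succ_succ, qBinomial_succ_succ' (c := d) (d := k + 1) (by omega),
      ih (k := k) (d := d + 1) (by omega), ih (k := k + 1) (d := d) (by omega)]

lemma natDegree_qBinomial_le {m k d : ℕ} (h : k + d = m) :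
    (qBinomial m k).natDegree ≤ k * d := by
  induction m generalizing k d with
  | zero =>
    obtain rfl : k = 0 := by omega
    simp
  | succ m ih =>
    rcases k with _ | k
    · simp
    rcases d with _ | d
    · obtain rfl : k = m := by omega
      simp
    rw [qBinomial_succ_succ]
    refine natDegree_add_le_of_degree_le ((ih (d := d + 1) (by omega)).trans ?_)
      ((natDegree_mul_le_of_le (natDegree_X_pow_le _) (ih (d := d) (by omega))).trans ?_)
    · gcongr; omega
    · rw [Nat.mul_succ, add_comm]

lemma reflect_qBinomial {m k d : ℕ} (h : k + d = m) :
    reflect (k * d) (qBinomial m k) = qBinomial m k := by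
  induction m generalizing k d with
  | zero =>
    obtain rfl : k = 0 := by omega
    simp [reflect_one]
  | succ m ih =>
    rcases k with _ | k
    · simp [reflect_one]
    rcases d with _ | d
    · obtain rfl : k = m := by omega
      simp [reflect_one]
    have h₁ : reflect ((k + 1) * (d + 1)) (qBinomial m k) = qBinomial m k * X ^ (d + 1) := by
      have := reflect_mul (qBinomial m k) 1 (natDegree_qBinomial_le (d := d + 1) (by omega))
        (natDegree_one.trans_le (Nat.zero_le (d + 1)))
      rwa [mul_one, ih (by omega), reflect_one, ← Nat.succ_mul] at this
    have h₂ : reflect ((k + 1) * (d + 1)) (X ^ (k + 1) * qBinomial m (k + 1)) =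
        qBinomial m (k + 1) := by
      rw [show (k + 1) * (d + 1) = (k + 1) + (k + 1) * d by ring,
        reflect_mul _ _ (natDegree_X_pow_le _) (natDegree_qBinomial_le (by omega)),
        ih (by omega), reflect_monomial, revAt_le le_rfl, Nat.sub_self, pow_zero, one_mul]
    conv_lhs => rw [qBinomial_succ_succ, reflect_add, h₁, h₂]
    rw [qBinomial_succ_succ' (c := k) (d := d + 1) (by omega)]
    ring

lemma X_pow_mul_qBinomial_succ_succ_add (m c : ℕ) :
    X ^ (c + 1) * qBinomial (m + 1) (c + 1) + qBinomial m c =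
      qBinomial (m + 1) (c + 1) + X ^ (m + 1) * qBinomial m c := by
  rcases le_or_gt c m with hcm | hcm
  · obtain ⟨d, rfl⟩ : ∃ d, m = c + d := ⟨m - c, by omega⟩
    linear_combination X ^ (c + 1) * qBinomial_succ_succ' (c := c) (d := d) rfl -
      qBinomial_succ_succ (c + d) c
  · simp [qBinomial_eq_zero_of_lt hcm, qBinomial_eq_zero_of_lt (by omega : m + 1 < c + 1)]

lemma qBinomial_add_two_succ (l c : ℕ) :
    qBinomial (l + 2) (c + 1) + qBinomial l c =
      qBinomial (l + 1) (c + 1) + X ^ (l + 1) * qBinomial l c + qBinomial (l + 1) c := by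
  linear_combination qBinomial_succ_succ (l + 1) c + X_pow_mul_qBinomial_succ_succ_add l c

lemma qBinomial_add_two_central (j : ℕ) :
    qBinomial (j + 2) ((j + 3) / 2) =
      qBinomial (j + 1) ((j + 2) / 2) + X ^ ((j + 3) / 2) * qBinomial j ((j + 3) / 2) +
        X ^ (j + 1) * qBinomial j ((j + 1) / 2) := by
  obtain ⟨a, rfl | rfl⟩ := Nat.even_or_odd' j
  · rw [show (2 * a + 3) / 2 = a + 1 by omega, show (2 * a + 2) / 2 = a + 1 by omega,
      show (2 * a + 1) / 2 = a by omega]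
    linear_combination qBinomial_add_two_succ (2 * a) a + qBinomial_succ_succ (2 * a) a +
      qBinomial_symm (m := 2 * a + 1) (k := a) (d := a + 1) (by omega)
  · rw [show (2 * a + 1 + 3) / 2 = a + 2 by omega, show (2 * a + 1 + 2) / 2 = a + 1 by omega,
      show (2 * a + 1 + 1) / 2 = a + 1 by omega]
    linear_combination qBinomial_add_two_succ (2 * a + 1) (a + 1) +
      qBinomial_succ_succ (2 * a + 1) (a + 1)

/-- At `q = 1` the `t`-th summand (`t ≤ h`) is `C(l, ⌊(l + t + 1) / 2⌋)`, which by the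
reflection principle counts the words of length `l` whose largest prefix excess `#E - #N` is
exactly `t`. -/
noncomputable def boundedGFFormula : ℕ → ℕ → ℤ[X]
  | 0, l => qBinomial l ((l + 1) / 2)
  | h + 1, l => boundedGFFormula h l + X ^ ((l + h + 2) / 2) * qBinomial l ((l + h + 2) / 2)

lemma boundedGFFormula_zero (l : ℕ) : boundedGFFormula 0 l = qBinomial l ((l + 1) / 2) := rfl

lemma boundedGFFormula_succ (h l : ℕ) : boundedGFFormula (h + 1) l =
    boundedGFFormula h l + X ^ ((l + h + 2) / 2) * qBinomial l ((l + h + 2) / 2) := rfl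

lemma boundedGFFormula_zero_right (h : ℕ) : boundedGFFormula h 0 = 1 := by
  induction h with
  | zero => rfl
  | succ h ih =>
    rw [boundedGFFormula_succ, ih, qBinomial_eq_zero_of_lt (by omega), mul_zero, add_zero]

lemma boundedGFFormula_succ_one (h : ℕ) : boundedGFFormula (h + 1) 1 = 1 + X := by
  induction h with
  | zero => simp [boundedGFFormula_succ, boundedGFFormula_zero]
  | succ h ih =>
    rw [boundedGFFormula_succ, ih, qBinomial_eq_zero_of_lt (by omega), mul_zero, add_zero]

lemma boundedGFFormula_one (l : ℕ) : boundedGFFormula 1 l = boundedGFFormula 0 (l + 1) := by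
  rw [boundedGFFormula_succ, boundedGFFormula_zero, boundedGFFormula_zero, add_zero]
  obtain ⟨a, rfl | rfl⟩ := Nat.even_or_odd' l
  · rw [show (2 * a + 1) / 2 = a by omega, show (2 * a + 2) / 2 = a + 1 by omega,
      qBinomial_succ_succ]
  · rw [show (2 * a + 1 + 1) / 2 = a + 1 by omega, show (2 * a + 1 + 2) / 2 = a + 1 by omega,
      qBinomial_succ_succ (2 * a + 1) a,
      qBinomial_symm (m := 2 * a + 1) (k := a) (d := a + 1) (by omega)]

lemma boundedGFFormula_rec (h l : ℕ) :
    boundedGFFormula (h + 1) (l + 2) + X * boundedGFFormula (h + 1) l =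
      boundedGFFormula (h + 2) (l + 1) + X ^ (l + 2) * boundedGFFormula (h + 1) l +
        X * boundedGFFormula h (l + 1) := by
  induction h with
  | zero =>
    rw [boundedGFFormula_one, boundedGFFormula_one, boundedGFFormula_succ 1,
      boundedGFFormula_one]
    simp only [boundedGFFormula_zero]
    linear_combination qBinomial_add_two_central (l + 1)
  | succ h ih =>
    rw [boundedGFFormula_succ (h + 1) (l + 2), boundedGFFormula_succ (h + 1) l,
      boundedGFFormula_succ (h + 2), boundedGFFormula_succ h (l + 1)]
    obtain ⟨q, hq⟩ : ∃ q, q = (l + h + 3) / 2 := ⟨_, rfl⟩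
    rw [show (l + 2 + (h + 1) + 2) / 2 = q + 1 by omega, show (l + (h + 1) + 2) / 2 = q by omega,
      show (l + 1 + (h + 2) + 2) / 2 = q + 1 by omega, show (l + 1 + h + 2) / 2 = q by omega]
    linear_combination ih + X ^ (q + 1) * qBinomial_add_two_succ l q

section Paths

variable {l : ℕ}

lemma cons_mk_succ {α : Type*} (b : α) (v : Fin l → α) {j : ℕ} (hj : j + 1 < l + 1) :
    (Fin.cons b v : Fin (l + 1) → α) ⟨j + 1, hj⟩ = v ⟨j, by omega⟩ :=
  Fin.cases_succ' _

lemma pathDes_cons (b : Bool) (v : Fin (l + 1) → Bool) :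
    pathDes (Fin.cons b v : Fin (l + 2) → Bool) =
      (if b = false ∧ v 0 = true then {1} else ∅) ∪
        (pathDes v).map (addRightEmbedding 1) := by
  ext (_ | _ | j) <;> split_ifs <;> simp_all [pathDes, cons_mk_succ]

lemma pathDes_eq_empty_of_le_one {m : ℕ} (hm : m ≤ 1) (w : Fin m → Bool) :
    pathDes w = ∅ := by
  refine Finset.eq_empty_of_forall_notMem fun i hi => ?_
  simp only [pathDes, Finset.mem_filter, Finset.mem_Ioo] at hi
  omega

lemma sum_pathDes_cons (b : Bool) (v : Fin (l + 1) → Bool) :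
    ∑ i ∈ pathDes (Fin.cons b v : Fin (l + 2) → Bool), (l + 2 - i) =
      (if b = false ∧ v 0 = true then l + 1 else 0) + ∑ i ∈ pathDes v, (l + 1 - i) := by
  have hdisj : Disjoint (if b = false ∧ v 0 = true then {1} else ∅)
      ((pathDes v).map (addRightEmbedding 1)) := by
    split_ifs
    · simp [pathDes]
    · simp
  rw [pathDes_cons, Finset.sum_union hdisj, Finset.sum_map]
  split_ifs <;> simp

lemma countE_zero {m : ℕ} (w : Fin m → Bool) : countE w 0 = 0 := by simp [countE]

lemma countN_zero {m : ℕ} (w : Fin m → Bool) : countN w 0 = 0 := by simp [countN]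

lemma countE_cons_succ (b : Bool) (v : Fin l → Bool) (k : ℕ) :
    countE (Fin.cons b v : Fin (l + 1) → Bool) (k + 1) =
      (if b = false then 1 else 0) + countE v k := by
  simp only [countE, Finset.card_filter, Fin.sum_univ_succ]
  simp

lemma countN_cons_succ (b : Bool) (v : Fin l → Bool) (k : ℕ) :
    countN (Fin.cons b v : Fin (l + 1) → Bool) (k + 1) =
      (if b = true then 1 else 0) + countN v k := by
  simp only [countN, Finset.card_filter, Fin.sum_univ_succ]
  simp

lemma negPath_cons (b : Bool) (v : Fin l → Bool) :
    negPath (Fin.cons b v : Fin (l + 1) → Bool) = (if b = false then 1 else 0) + negPath v := by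
  simp only [negPath, Finset.card_filter, Fin.sum_univ_succ]
  simp

def IsBoundedPath {m : ℕ} (h : ℕ) (w : Fin m → Bool) : Prop :=
  ∀ k, countE w k ≤ countN w k + h

lemma isBoundedPath_of_isEmpty (h : ℕ) (w : Fin 0 → Bool) : IsBoundedPath h w := by
  simp [IsBoundedPath, countE]

lemma isBoundedPath_cons_iff (h : ℕ) (b : Bool) (v : Fin l → Bool) :
    IsBoundedPath h (Fin.cons b v : Fin (l + 1) → Bool) ↔
      ∀ k, (if b = false then 1 else 0) + countE v k ≤
        (if b = true then 1 else 0) + countN v k + h := by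
  refine ⟨fun H k => ?_, fun H k => ?_⟩
  · simpa only [countE_cons_succ, countN_cons_succ] using H (k + 1)
  · rcases k with _ | k
    · simp [countE_zero]
    · simpa only [countE_cons_succ, countN_cons_succ] using H k

lemma isBoundedPath_cons_true (h : ℕ) (v : Fin l → Bool) :
    IsBoundedPath h (Fin.cons true v : Fin (l + 1) → Bool) ↔ IsBoundedPath (h + 1) v := by
  rw [isBoundedPath_cons_iff]
  exact forall_congr' fun k => by simp only [Bool.true_eq_false, ↓reduceIte, zero_add]; omega

lemma isBoundedPath_succ_cons_false (h : ℕ) (v : Fin l → Bool) :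
    IsBoundedPath (h + 1) (Fin.cons false v : Fin (l + 1) → Bool) ↔ IsBoundedPath h v := by
  rw [isBoundedPath_cons_iff]
  exact forall_congr' fun k => by simp only [↓reduceIte, Bool.false_eq_true, zero_add]; omega

lemma not_isBoundedPath_zero_cons_false (v : Fin l → Bool) :
    ¬ IsBoundedPath 0 (Fin.cons false v : Fin (l + 1) → Bool) := fun H => by
  simpa [countE_zero, countN_zero] using (isBoundedPath_cons_iff 0 false v).1 H 0

def halfMajB {m : ℕ} (w : Fin m → Bool) : ℕ := negPath w + ∑ i ∈ pathDes w, (m - i)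

lemma halfMajB_of_isEmpty (w : Fin 0 → Bool) : halfMajB w = 0 := by
  simp [halfMajB, negPath, pathDes]

lemma halfMajB_cons_of_isEmpty (b : Bool) (v : Fin 0 → Bool) :
    halfMajB (Fin.cons b v : Fin 1 → Bool) = if b = false then 1 else 0 := by
  rw [halfMajB, negPath_cons, pathDes_eq_empty_of_le_one le_rfl]
  simp [negPath]

lemma halfMajB_cons (b : Bool) (v : Fin (l + 1) → Bool) :
    halfMajB (Fin.cons b v : Fin (l + 2) → Bool) =
      halfMajB v + (if b = false then 1 else 0) +
        (if b = false ∧ v 0 = true then l + 1 else 0) := by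
  rw [halfMajB, halfMajB, negPath_cons, sum_pathDes_cons]
  ring

lemma halfMajB_cons_true (v : Fin l → Bool) :
    halfMajB (Fin.cons true v : Fin (l + 1) → Bool) = halfMajB v := by
  cases l with
  | zero => simp [halfMajB_cons_of_isEmpty, halfMajB_of_isEmpty]
  | succ l => simp [halfMajB_cons]

lemma halfMajB_cons_false_cons_true (u : Fin l → Bool) :
    halfMajB (Fin.cons false (Fin.cons true u) : Fin (l + 2) → Bool) =
      halfMajB u + (l + 2) := by
  simp only [halfMajB_cons, halfMajB_cons_true, ↓reduceIte, Fin.cons_zero, and_self]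
  ring

lemma halfMajB_cons_false_cons_false (u : Fin l → Bool) :
    halfMajB (Fin.cons false (Fin.cons false u) : Fin (l + 2) → Bool) =
      halfMajB (Fin.cons false u : Fin (l + 1) → Bool) + 1 := by
  simp [halfMajB_cons]

noncomputable def pathWeight {m : ℕ} (h : ℕ) (w : Fin m → Bool) : ℤ[X] :=
  if IsBoundedPath h w then X ^ halfMajB w else 0

lemma pathWeight_of_isEmpty (h : ℕ) (w : Fin 0 → Bool) : pathWeight h w = 1 := by
  rw [pathWeight, if_pos (isBoundedPath_of_isEmpty h w), halfMajB_of_isEmpty, pow_zero]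

lemma pathWeight_succ_cons_false_of_isEmpty (h : ℕ) (v : Fin 0 → Bool) :
    pathWeight (h + 1) (Fin.cons false v : Fin 1 → Bool) = X := by
  have hv := (isBoundedPath_succ_cons_false h v).2 (isBoundedPath_of_isEmpty h v)
  rw [pathWeight, if_pos hv, halfMajB_cons_of_isEmpty, if_pos rfl, pow_one]

lemma pathWeight_cons_true (h : ℕ) (v : Fin l → Bool) :
    pathWeight h (Fin.cons true v : Fin (l + 1) → Bool) = pathWeight (h + 1) v := by
  simp only [pathWeight, isBoundedPath_cons_true, halfMajB_cons_true]

lemma pathWeight_zero_cons_false (v : Fin l → Bool) :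
    pathWeight 0 (Fin.cons false v : Fin (l + 1) → Bool) = 0 :=
  if_neg (not_isBoundedPath_zero_cons_false v)

lemma pathWeight_succ_cons_false_cons_true (h : ℕ) (u : Fin l → Bool) :
    pathWeight (h + 1) (Fin.cons false (Fin.cons true u) : Fin (l + 2) → Bool) =
      X ^ (l + 2) * pathWeight (h + 1) u := by
  simp only [pathWeight, isBoundedPath_succ_cons_false, isBoundedPath_cons_true,
    halfMajB_cons_false_cons_true]
  split_ifs <;> ring

lemma pathWeight_succ_cons_false_cons_false (h : ℕ) (u : Fin l → Bool) :
    pathWeight (h + 1) (Fin.cons false (Fin.cons false u) : Fin (l + 2) → Bool) =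
      X * pathWeight h (Fin.cons false u : Fin (l + 1) → Bool) := by
  simp only [pathWeight, isBoundedPath_succ_cons_false, halfMajB_cons_false_cons_false]
  split_ifs <;> ring

end Paths

lemma sum_bool_tuple_succ {M : Type*} [AddCommMonoid M] {l : ℕ}
    (f : (Fin (l + 1) → Bool) → M) :
    ∑ w, f w = ∑ v, f (Fin.cons true v) + ∑ v, f (Fin.cons false v) := by
  rw [← (Fin.consEquiv fun _ => Bool).sum_comp, Fintype.sum_prod_type, Fintype.sum_bool]
  rfl

noncomputable def boundedPathGF (h l : ℕ) : ℤ[X] := ∑ w : Fin l → Bool, pathWeight h w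

noncomputable def eastBoundedPathGF (h l : ℕ) : ℤ[X] :=
  ∑ v : Fin l → Bool, pathWeight h (Fin.cons false v : Fin (l + 1) → Bool)

lemma boundedPathGF_zero_right (h : ℕ) : boundedPathGF h 0 = 1 := by
  simp [boundedPathGF, pathWeight_of_isEmpty]

lemma boundedPathGF_succ (h l : ℕ) :
    boundedPathGF h (l + 1) = boundedPathGF (h + 1) l + eastBoundedPathGF h l := by
  simp only [boundedPathGF, eastBoundedPathGF, sum_bool_tuple_succ (pathWeight h),
    pathWeight_cons_true]

lemma eastBoundedPathGF_zero_left (l : ℕ) : eastBoundedPathGF 0 l = 0 := by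
  simp [eastBoundedPathGF, pathWeight_zero_cons_false]

lemma eastBoundedPathGF_succ_zero (h : ℕ) : eastBoundedPathGF (h + 1) 0 = X := by
  simp [eastBoundedPathGF, pathWeight_succ_cons_false_of_isEmpty]

lemma eastBoundedPathGF_succ_succ (h l : ℕ) :
    eastBoundedPathGF (h + 1) (l + 1) =
      X ^ (l + 2) * boundedPathGF (h + 1) l + X * eastBoundedPathGF h l := by
  simp only [eastBoundedPathGF, boundedPathGF,
    sum_bool_tuple_succ (fun v => pathWeight (h + 1) (Fin.cons false v : Fin (l + 2) → Bool)),
    pathWeight_succ_cons_false_cons_true, pathWeight_succ_cons_false_cons_false, Finset.mul_sum]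

lemma boundedPathGF_eq_and_eastBoundedPathGF_add_eq (l : ℕ) :
    ∀ h, boundedPathGF h l = boundedGFFormula h l ∧
      eastBoundedPathGF h l + boundedGFFormula (h + 1) l = boundedGFFormula h (l + 1) := by
  induction l with
  | zero =>
    rintro (_ | h)
    · simp [boundedPathGF_zero_right, boundedGFFormula_zero_right, eastBoundedPathGF_zero_left,
        boundedGFFormula_zero]
    · simp [boundedPathGF_zero_right, boundedGFFormula_zero_right, eastBoundedPathGF_succ_zero,
        boundedGFFormula_succ_one, add_comm]
  | succ l ih =>
    intro h
    have hgf : boundedPathGF h (l + 1) = boundedGFFormula h (l + 1) := by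
      rw [boundedPathGF_succ, (ih (h + 1)).1, ← (ih h).2, add_comm]
    refine ⟨hgf, ?_⟩
    rcases h with _ | h
    · rw [eastBoundedPathGF_zero_left, zero_add, boundedGFFormula_one]
    · rw [eastBoundedPathGF_succ_succ, (ih (h + 1)).1]
      linear_combination X * (ih h).2 - boundedGFFormula_rec h l

lemma boundedPathGF_eq_formula (h l : ℕ) : boundedPathGF h l = boundedGFFormula h l :=
  (boundedPathGF_eq_and_eastBoundedPathGF_add_eq l h).1

lemma reflect_expand {R : Type*} [CommSemiring R] {p : ℕ} (hp : 0 < p) (N : ℕ) (f : R[X]) :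
    reflect (p * N) (expand R p f) = expand R p (reflect N f) := by
  induction f using Polynomial.induction_on' with
  | add f g hf hg => rw [map_add, reflect_add, reflect_add, map_add, hf, hg]
  | monomial n a =>
    simp only [← C_mul_X_pow_eq_monomial, map_mul, expand_C, map_pow, expand_X, ← pow_mul,
      reflect_C_mul_X_pow]
    rcases le_or_gt n N with h | h
    · rw [revAt_le (Nat.mul_le_mul_left p h), revAt_le h, Nat.mul_sub]
    · rw [revAt_eq_self_of_lt (Nat.mul_lt_mul_of_pos_left h hp), revAt_eq_self_of_lt h]

lemma coeff_sum_ite_X_pow {R α : Type*} [Semiring R] [Fintype α] (P : α → Prop) (f : α → ℕ)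
    (k : ℕ) :
    (∑ a, if P a then (X : R[X]) ^ f a else 0).coeff k = ({a | P a ∧ f a = k}.ncard : R) := by
  rw [finsetSum_coeff, Set.ncard_eq_toFinset_card', Set.toFinset_ofPred, Finset.card_filter]
  push_cast
  refine Finset.sum_congr rfl fun a _ => ?_
  split_ifs <;> simp_all [coeff_X_pow, eq_comm]

lemma isDyckB_iff_isBoundedPath_zero (n : ℕ) (w : Fin (2 * n) → Bool) :
    IsDyckB n w ↔ IsBoundedPath 0 w := by
  simp [IsDyckB, IsBoundedPath]

lemma majB_eq_two_mul_halfMajB (n : ℕ) (w : Fin (2 * n) → Bool) :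
    majB n w = 2 * halfMajB w :=
  rfl

noncomputable def majBGF (n : ℕ) : ℤ[X] :=
  ∑ w : Fin (2 * n) → Bool, if IsDyckB n w then X ^ majB n w else 0

lemma majBGF_eq_expand (n : ℕ) : majBGF n = expand ℤ 2 (qBinomial (2 * n) n) := by
  have h := boundedPathGF_eq_formula 0 (2 * n)
  rw [boundedGFFormula_zero, show (2 * n + 1) / 2 = n by omega] at h
  rw [← h, boundedPathGF, map_sum]
  refine Finset.sum_congr rfl fun w _ => ?_
  simp only [pathWeight, apply_ite (expand ℤ 2), map_pow, expand_X, map_zero, ← pow_mul,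
    isDyckB_iff_isBoundedPath_zero, majB_eq_two_mul_halfMajB]

theorem majB_symmetric_general (n : ℕ) (k : ℕ) (hk : k ≤ 2 * n ^ 2) :
    {w : Fin (2 * n) → Bool | IsDyckB n w ∧ majB n w = k}.ncard =
      {w : Fin (2 * n) → Bool | IsDyckB n w ∧ majB n w = 2 * n ^ 2 - k}.ncard := by
  have hpal : reflect (2 * n ^ 2) (majBGF n) = majBGF n := by
    rw [majBGF_eq_expand, show 2 * n ^ 2 = 2 * (n * n) by ring, reflect_expand two_pos,
      reflect_qBinomial (by omega : n + n = 2 * n)]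
  have hcoeff : (majBGF n).coeff k = (majBGF n).coeff (2 * n ^ 2 - k) := by
    conv_lhs => rw [← hpal]
    rw [coeff_reflect, revAt_le hk]
  rw [majBGF, coeff_sum_ite_X_pow, coeff_sum_ite_X_pow] at hcoeff
  exact_mod_cast hcoeff

/-- The coefficients of `∑_w q^{maj(w)}` over type `B_n` Dyck paths are
symmetric: for every `n ≥ 1` and `0 ≤ k ≤ 2n²`, the number of type `B_n` Dyck
paths with type `B` major index `k` equals the number of those with type `B`
major index `2n² - k`. -/
theorem majB_symmetric (n : ℕ) (hn : 1 ≤ n) (k : ℕ) (hk : k ≤ 2 * n ^ 2) :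
    {w : Fin (2 * n) → Bool | IsDyckB n w ∧ majB n w = k}.ncard =
      {w : Fin (2 * n) → Bool | IsDyckB n w ∧ majB n w = 2 * n ^ 2 - k}.ncard :=
  majB_symmetric_general n k hk

end Stmt
end
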